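/- arXiv:2010.04127 — 9 statements merged into one kernel-verified Lean document; each statement's English description precedes it below -/
import Mathlib

section
/- Let p be prime and let c be an exact 4-coloring of Z_p that is rainbow Sidon free. Then for every i ∈ Z_p with i ≠ 0 there is an i-dominant color: a color X such that for every x ∈ Z_p, either c(x) = c(x+i) or X ∈ {c(x), c(x+i)}. -/
/-- `c` admits a rainbow solution to the Sidon equation `x₁ + x₂ = x₃ + x₄`:
a solution whose four colors are pairwise distinct. -/
def HasRainbowSidon {n : ℕ} {α : Type*} (c : ZMod n → α) : Prop :=
  ∃ x₁ x₂ x₃ x₄ : ZMod n, x₁ + x₂ = x₃ + x₄ ∧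
    c x₁ ≠ c x₂ ∧ c x₁ ≠ c x₃ ∧ c x₁ ≠ c x₄ ∧
    c x₂ ≠ c x₃ ∧ c x₂ ≠ c x₄ ∧ c x₃ ≠ c x₄

/-- The rainbow number `rb(ℤ_n, S)` of `ℤ_n` for the Sidon equation: the least `r > 0`
such that every exact (surjective) `r`-coloring of `ℤ_n` admits a rainbow Sidon solution.
(When no such `r` exists, `r = n + 1` belongs to the set vacuously, matching the
convention `rb(ℤ_n, S) = n + 1`.) -/
noncomputable def rbSidon (n : ℕ) : ℕ :=
  sInf {r : ℕ | 0 < r ∧ ∀ c : ZMod n → Fin r, Function.Surjective c → HasRainbowSidon c}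

theorem exists_dominant_color (p : ℕ) (hp : p.Prime)
    (c : ZMod p → Fin 4) (hsurj : Function.Surjective c)
    (hfree : ¬ HasRainbowSidon c) :
    ∀ i : ZMod p, i ≠ 0 → ∃ X : Fin 4,
      ∀ x : ZMod p, c x = c (x + i) ∨ X = c x ∨ X = c (x + i) := by
  intro i hi
  haveI : Fact p.Prime := ⟨hp⟩
  haveI : NeZero p := ⟨hp.ne_zero⟩
  by_contra hno
  push_neg at hno
  -- key: any two bichromatic edges share a color
  have key : ∀ u v : ZMod p, c u ≠ c (u + i) → c v ≠ c (v + i) →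
      c u = c v ∨ c u = c (v + i) ∨ c (u + i) = c v ∨ c (u + i) = c (v + i) := by
    intro u v hu hv
    by_contra hK
    push_neg at hK
    obtain ⟨h1, h2, h3, h4⟩ := hK
    exact hfree ⟨u, v + i, u + i, v, by ring, h2, hu, h1, Ne.symm h4, Ne.symm hv, h3⟩
  -- orbit lemma
  have orbit : ∀ (D : Fin 4) (a : ZMod p), c a = D →
      (∀ x, c x = D → c (x + i) = D) → ∀ b, c b = D := by
    intro D a ha hcl b
    have hn : ∀ n : ℕ, c (a + n • i) = D := by
      intro n
      induction n with
      | zero => simpa using ha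
      | succ n ih =>
        have := hcl _ ih
        rw [succ_nsmul, ← add_assoc]
        exact this
    have hb : b = a + (((b - a) * i⁻¹).val : ℕ) • i := by
      rw [nsmul_eq_mul, ZMod.natCast_val, ZMod.cast_id, mul_assoc,
        inv_mul_cancel₀ hi, mul_one]
      ring
    rw [hb]; exact hn _
  obtain ⟨x, hx, -, -⟩ := hno 0
  -- edge with colors {B, C}, where A = c x, B = c (x+i)
  obtain ⟨C, hCA, hCB, u, hu⟩ :
      ∃ C, C ≠ c x ∧ C ≠ c (x + i) ∧
        ∃ u, (c u = c (x + i) ∧ c (u + i) = C) ∨ (c u = C ∧ c (u + i) = c (x + i)) := by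
    obtain ⟨y, hy, hyA, hyA'⟩ := hno (c x)
    rcases key x y hx hy with h1 | h1 | h1 | h1
    · exact absurd h1 hyA
    · exact absurd h1 hyA'
    · exact ⟨c (y + i), Ne.symm hyA', fun e => hy (e.trans h1).symm, y,
        Or.inl ⟨h1.symm, rfl⟩⟩
    · exact ⟨c y, Ne.symm hyA, fun e => hy (e.trans h1), y, Or.inr ⟨rfl, h1.symm⟩⟩
  have hu' : c u ≠ c (u + i) := by
    rcases hu with ⟨h1, h2⟩ | ⟨h1, h2⟩
    · rw [h1, h2]; exact Ne.symm hCB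
    · rw [h1, h2]; exact hCB
  -- edge with colors {A, C}
  obtain ⟨v, hv⟩ : ∃ v, (c v = c x ∧ c (v + i) = C) ∨ (c v = C ∧ c (v + i) = c x) := by
    obtain ⟨z, hz, hzB, hzB'⟩ := hno (c (x + i))
    have h1 : c x = c z ∨ c x = c (z + i) := by
      rcases key x z hx hz with h | h | h | h
      · exact Or.inl h
      · exact Or.inr h
      · exact absurd h hzB
      · exact absurd h hzB'
    have h2 : C = c z ∨ C = c (z + i) := by
      rcases hu with ⟨hu1, hu2⟩ | ⟨hu1, hu2⟩ <;>
        rcases key u z hu' hz with h | h | h | h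
      · exact absurd (hu1 ▸ h) hzB
      · exact absurd (hu1 ▸ h) hzB'
      · exact Or.inl (hu2 ▸ h)
      · exact Or.inr (hu2 ▸ h)
      · exact Or.inl (hu1 ▸ h)
      · exact Or.inr (hu1 ▸ h)
      · exact absurd (hu2 ▸ h) hzB
      · exact absurd (hu2 ▸ h) hzB'
    rcases h1 with h1 | h1 <;> rcases h2 with h2 | h2
    · exact absurd (h2.trans h1.symm) hCA
    · exact ⟨z, Or.inl ⟨h1.symm, h2.symm⟩⟩
    · exact ⟨z, Or.inr ⟨h2.symm, h1.symm⟩⟩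
    · exact absurd (h2.trans h1.symm) hCA
  have hv' : c v ≠ c (v + i) := by
    rcases hv with ⟨h1, h2⟩ | ⟨h1, h2⟩
    · rw [h1, h2]; exact Ne.symm hCA
    · rw [h1, h2]; exact hCA
  -- the fourth color D
  have exD : ∀ A B C : Fin 4, ∃ D : Fin 4, D ≠ A ∧ D ≠ B ∧ D ≠ C := by decide
  obtain ⟨D, hDA, hDB, hDC⟩ := exD (c x) (c (x + i)) C
  have cover : ∀ A B C D E : Fin 4, A ≠ B → C ≠ A → C ≠ B → D ≠ A → D ≠ B → D ≠ C →
      E = A ∨ E = B ∨ E = C ∨ E = D := by decide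
  -- D's color class is closed under +i
  have Dclosed : ∀ x0, c x0 = D → c (x0 + i) = D := by
    intro x0 hx0
    by_contra hne
    have hx0e : c x0 ≠ c (x0 + i) := by rw [hx0]; exact fun e => hne e.symm
    rcases cover (c x) (c (x + i)) C D (c (x0 + i)) hx hCA hCB hDA hDB hDC with hE | hE | hE | hE
    · -- c (x0+i) = A : use edge u with colors {B, C}
      rcases hu with ⟨h1, h2⟩ | ⟨h1, h2⟩ <;>
        rcases key x0 u hx0e hu' with h | h | h | h
      · exact hDB ((hx0 ▸ h1 ▸ h : (D : Fin 4) = _))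
      · exact hDC (hx0 ▸ h2 ▸ h)
      · exact hx ((hE ▸ h1 ▸ h : c x = c (x + i)))
      · exact hCA ((hE ▸ h2 ▸ h : c x = C).symm)
      · exact hDC (hx0 ▸ h1 ▸ h)
      · exact hDB (hx0 ▸ h2 ▸ h)
      · exact hCA ((hE ▸ h1 ▸ h : c x = C).symm)
      · exact hx ((hE ▸ h2 ▸ h : c x = c (x + i)))
    · -- c (x0+i) = B : use edge v with colors {A, C}
      rcases hv with ⟨h1, h2⟩ | ⟨h1, h2⟩ <;>
        rcases key x0 v hx0e hv' with h | h | h | h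
      · exact hDA (hx0 ▸ h1 ▸ h)
      · exact hDC (hx0 ▸ h2 ▸ h)
      · exact hx ((hE ▸ h1 ▸ h : c (x + i) = c x).symm)
      · exact hCB ((hE ▸ h2 ▸ h : c (x + i) = C).symm)
      · exact hDC (hx0 ▸ h1 ▸ h)
      · exact hDA (hx0 ▸ h2 ▸ h)
      · exact hCB ((hE ▸ h1 ▸ h : c (x + i) = C).symm)
      · exact hx ((hE ▸ h2 ▸ h : c (x + i) = c x).symm)
    · -- c (x0+i) = C : use edge x with colors {A, B}
      rcases key x0 x hx0e hx with h | h | h | h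
      · exact hDA (hx0 ▸ h)
      · exact hDB (hx0 ▸ h)
      · exact hCA (hE ▸ h)
      · exact hCB (hE ▸ h)
    · exact hne hE
  obtain ⟨a, haD⟩ := hsurj D
  have hall := orbit D a haD Dclosed
  exact hDA (hall x).symm
end

section
/- Let p be a prime with p ≤ 3, let n be a positive integer, and suppose there exists a rainbow Sidon free exact r-coloring of Z_n. Then there exists a rainbow Sidon free exact (r+1)-coloring of Z_{pn}. -/
private lemma one_bad {p n : ℕ} (a b c d : ℕ)
    (h : ((p : ℤ) * n) ∣ ((a : ℤ) + b) - ((c : ℤ) + d)) (hb : p ∣ b) (hc : p ∣ c)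
    (hd : p ∣ d) : p ∣ a := by
  have hpd : (p : ℤ) ∣ ((a : ℤ) + b) - ((c : ℤ) + d) := (dvd_mul_right (p : ℤ) n).trans h
  have hb' : (p : ℤ) ∣ (b : ℤ) := Int.natCast_dvd_natCast.mpr hb
  have hc' : (p : ℤ) ∣ (c : ℤ) := Int.natCast_dvd_natCast.mpr hc
  have hd' : (p : ℤ) ∣ (d : ℤ) := Int.natCast_dvd_natCast.mpr hd
  have hfin : (p : ℤ) ∣ (a : ℤ) := by
    have e : (a : ℤ) = (((a : ℤ) + b) - ((c : ℤ) + d)) + c + d - b := by ring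
    rw [e]
    exact dvd_sub (dvd_add (dvd_add hpd hc') hd') hb'
  exact_mod_cast hfin

theorem expand_coloring_small_prime (p n r : ℕ) (hp : p.Prime) (hp3 : p ≤ 3) (hn : 0 < n)
    (h : ∃ c : ZMod n → Fin r, Function.Surjective c ∧ ¬ HasRainbowSidon c) :
    ∃ c' : ZMod (p * n) → Fin (r + 1), Function.Surjective c' ∧ ¬ HasRainbowSidon c' := by
  classical
  obtain ⟨c, hcs, hcf⟩ := h
  haveI : NeZero n := ⟨hn.ne'⟩
  have hq : 0 < p * n := Nat.mul_pos hp.pos hn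
  haveI : NeZero (p * n) := ⟨hq.ne'⟩
  have h2q : 1 < p * n := by
    have := hp.two_le
    nlinarith
  haveI : Fact (1 < p * n) := ⟨h2q⟩
  set c' : ZMod (p * n) → Fin (r + 1) := fun x =>
    if p ∣ x.val then (c ((x.val / p : ℕ) : ZMod n)).castSucc else Fin.last r with hc'def
  refine ⟨c', ?_, ?_⟩
  · intro j
    induction j using Fin.lastCases with
    | last =>
      refine ⟨(1 : ZMod (p * n)), ?_⟩
      have h1 : (1 : ZMod (p * n)).val = 1 := ZMod.val_one (p * n)
      simp [hc'def, h1, Nat.dvd_one, hp.ne_one]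
    | cast i =>
      obtain ⟨y, hy⟩ := hcs i
      refine ⟨((p * y.val : ℕ) : ZMod (p * n)), ?_⟩
      have hlt : p * y.val < p * n := (Nat.mul_lt_mul_left hp.pos).mpr (ZMod.val_lt y)
      have hv : ((p * y.val : ℕ) : ZMod (p * n)).val = p * y.val := ZMod.val_cast_of_lt hlt
      simp only [hc'def]
      rw [hv, if_pos ⟨y.val, rfl⟩, Nat.mul_div_cancel_left _ hp.pos]
      simp [ZMod.natCast_val, ZMod.cast_id, hy]
  · rintro ⟨x1, x2, x3, x4, heq, h12, h13, h14, h23, h24, h34⟩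
    have hkey : ((p : ℤ) * n) ∣ ((x1.val : ℤ) + x2.val) - ((x3.val : ℤ) + x4.val) := by
      have h0 : (((((x1.val : ℤ) + x2.val) - ((x3.val : ℤ) + x4.val)) : ℤ) : ZMod (p * n)) = 0 := by
        push_cast [ZMod.natCast_val, ZMod.cast_id]
        rw [heq]; ring
      have := (ZMod.intCast_zmod_eq_zero_iff_dvd _ _).mp h0
      simpa using this
    by_cases d1 : p ∣ x1.val <;> by_cases d2 : p ∣ x2.val <;>
      by_cases d3 : p ∣ x3.val <;> by_cases d4 : p ∣ x4.val
    · -- all divisible: reduce to a rainbow solution in ZMod n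
      obtain ⟨b1, e1⟩ := d1
      obtain ⟨b2, e2⟩ := d2
      obtain ⟨b3, e3⟩ := d3
      obtain ⟨b4, e4⟩ := d4
      have col1 : c' x1 = (c ((b1 : ℕ) : ZMod n)).castSucc := by
        simp [hc'def, e1, Nat.mul_div_cancel_left _ hp.pos, Dvd.intro b1 rfl]
      have col2 : c' x2 = (c ((b2 : ℕ) : ZMod n)).castSucc := by
        simp [hc'def, e2, Nat.mul_div_cancel_left _ hp.pos, Dvd.intro b2 rfl]
      have col3 : c' x3 = (c ((b3 : ℕ) : ZMod n)).castSucc := by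
        simp [hc'def, e3, Nat.mul_div_cancel_left _ hp.pos, Dvd.intro b3 rfl]
      have col4 : c' x4 = (c ((b4 : ℕ) : ZMod n)).castSucc := by
        simp [hc'def, e4, Nat.mul_div_cancel_left _ hp.pos, Dvd.intro b4 rfl]
      push_cast [e1, e2, e3, e4] at hkey
      have hp0 : (p : ℤ) ≠ 0 := by exact_mod_cast hp.pos.ne'
      have hn' : (n : ℤ) ∣ ((b1 : ℤ) + b2) - ((b3 : ℤ) + b4) := by
        refine (mul_dvd_mul_iff_left hp0).mp ?_
        have e : (p : ℤ) * (((b1 : ℤ) + b2) - ((b3 : ℤ) + b4)) =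
            ((p : ℤ) * b1 + (p : ℤ) * b2) - ((p : ℤ) * b3 + (p : ℤ) * b4) := by ring
        rw [e]
        convert hkey using 2 <;> ring
      have hs : ((b1 : ℕ) : ZMod n) + (b2 : ℕ) = ((b3 : ℕ) : ZMod n) + (b4 : ℕ) := by
        have h0 : (((((b1 : ℤ) + b2) - ((b3 : ℤ) + b4)) : ℤ) : ZMod n) = 0 :=
          (ZMod.intCast_zmod_eq_zero_iff_dvd _ _).mpr hn'
        push_cast at h0
        exact sub_eq_zero.mp h0
      rw [col1, col2] at h12
      rw [col1, col3] at h13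
      rw [col1, col4] at h14
      rw [col2, col3] at h23
      rw [col2, col4] at h24
      rw [col3, col4] at h34
      exact hcf ⟨_, _, _, _, hs,
        fun hh => h12 (congrArg _ hh), fun hh => h13 (congrArg _ hh),
        fun hh => h14 (congrArg _ hh), fun hh => h23 (congrArg _ hh),
        fun hh => h24 (congrArg _ hh), fun hh => h34 (congrArg _ hh)⟩
    · -- only x4 not divisible
      refine d4 (one_bad (n := n) x4.val x3.val x1.val x2.val ?_ d3 d1 d2)
      have := (dvd_neg).mpr hkey
      rw [show -(((x1.val : ℤ) + x2.val) - ((x3.val : ℤ) + x4.val)) =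
        ((x4.val : ℤ) + x3.val) - ((x1.val : ℤ) + x2.val) from by ring] at this
      exact this
    · -- only x3 not divisible
      refine d3 (one_bad (n := n) x3.val x4.val x1.val x2.val ?_ d4 d1 d2)
      have := (dvd_neg).mpr hkey
      rw [show -(((x1.val : ℤ) + x2.val) - ((x3.val : ℤ) + x4.val)) =
        ((x3.val : ℤ) + x4.val) - ((x1.val : ℤ) + x2.val) from by ring] at this
      exact this
    · exact h34 (by simp [hc'def, d3, d4])
    · -- only x2 not divisible
      refine d2 (one_bad (n := n) x2.val x1.val x3.val x4.val ?_ d1 d3 d4)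
      rw [show ((x2.val : ℤ) + x1.val) - ((x3.val : ℤ) + x4.val) =
        ((x1.val : ℤ) + x2.val) - ((x3.val : ℤ) + x4.val) from by ring]
      exact hkey
    · exact h24 (by simp [hc'def, d2, d4])
    · exact h23 (by simp [hc'def, d2, d3])
    · exact h23 (by simp [hc'def, d2, d3])
    · -- only x1 not divisible
      exact d1 (one_bad (n := n) x1.val x2.val x3.val x4.val hkey d2 d3 d4)
    · exact h14 (by simp [hc'def, d1, d4])
    · exact h13 (by simp [hc'def, d1, d3])
    · exact h13 (by simp [hc'def, d1, d3])
    · exact h12 (by simp [hc'def, d1, d2])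
    · exact h12 (by simp [hc'def, d1, d2])
    · exact h12 (by simp [hc'def, d1, d2])
    · exact h12 (by simp [hc'def, d1, d2])
end

section
/- Let p be a prime with p ≥ 5, let n be a positive integer, and suppose there exists a rainbow Sidon free exact r-coloring of Z_n. Then there exists a rainbow Sidon free exact (r+2)-coloring of Z_{pn}. -/
set_option linter.unusedTactic false
set_option linter.unreachableTactic false
set_option maxHeartbeats 4000000



section Aux

variable (p n r : ℕ)

def gmap : ZMod (p*n) →+* ZMod p := ZMod.castHom (dvd_mul_right p n) (ZMod p)

variable (c : ZMod n → Fin r)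

def newc (x : ZMod (p*n)) : Fin (r+2) :=
  if gmap p n x = 0 then Fin.castLE (Nat.le_add_right r 2) (c ((x.val / p : ℕ) : ZMod n))
  else if gmap p n x = 1 ∨ gmap p n x = -1 then ⟨r, by omega⟩ else ⟨r+1, by omega⟩

variable {p n r c}

lemma gmap_eq (hp : 0 < p) (hn : 0 < n) (x : ZMod (p*n)) :
    gmap p n x = ((x.val : ℕ) : ZMod p) := by
  haveI : NeZero (p*n) := ⟨Nat.mul_ne_zero hp.ne' hn.ne'⟩
  conv_lhs => rw [← ZMod.natCast_zmod_val x]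
  rw [map_natCast]

lemma gmap_zero_iff (hp : 0 < p) (hn : 0 < n) (x : ZMod (p*n)) :
    gmap p n x = 0 ↔ p ∣ x.val := by
  rw [gmap_eq hp hn, ZMod.natCast_eq_zero_iff]

lemma newc_zero (hp : 0 < p) {x : ZMod (p*n)} {w : ℕ}
    (h0 : gmap p n x = 0) (e : x.val = p * w) :
    newc p n r c x = Fin.castLE (Nat.le_add_right r 2) (c (w : ZMod n)) := by
  unfold newc
  rw [if_pos h0, e, Nat.mul_div_cancel_left _ hp]

lemma newc_cond_iff {x y : ZMod (p*n)} (hx : gmap p n x ≠ 0) (hy : gmap p n y ≠ 0)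
    (hne : newc p n r c x ≠ newc p n r c y) :
    ((gmap p n x = 1 ∨ gmap p n x = -1) ↔ ¬(gmap p n y = 1 ∨ gmap p n y = -1)) := by
  by_cases px : gmap p n x = 1 ∨ gmap p n x = -1 <;>
    by_cases py : gmap p n y = 1 ∨ gmap p n y = -1 <;>
    simp only [px, py, iff_true, iff_false, not_not, not_true, not_false_iff] <;>
    first
    | (exfalso; apply hne; unfold newc; rw [if_neg hx, if_neg hy, if_pos px, if_pos py])
    | (exfalso; apply hne; unfold newc; rw [if_neg hx, if_neg hy, if_neg px, if_neg py])
    | trivial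

lemma newc_pm {x y : ZMod (p*n)} (hx : gmap p n x ≠ 0) (hy : gmap p n y ≠ 0)
    (hrel : gmap p n x = gmap p n y ∨ gmap p n x = - gmap p n y) :
    newc p n r c x = newc p n r c y := by
  by_contra hne
  have hiff := newc_cond_iff hx hy hne
  rcases hrel with h | h
  · rw [h] at hiff; tauto
  · rw [h] at hiff
    have : (-gmap p n y = 1 ∨ -gmap p n y = -1) ↔ (gmap p n y = 1 ∨ gmap p n y = -1) := by
      constructor
      · rintro (h1 | h1)
        · right; exact neg_eq_iff_eq_neg.mp h1
        · left; exact neg_injective h1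
      · rintro (h1 | h1)
        · right; rw [h1]
        · left; rw [h1, neg_neg]
    rw [this] at hiff; tauto

lemma sum_transfer (hp : 0 < p) (hn : 0 < n) {x₁ x₂ x₃ x₄ : ZMod (p*n)} {w₁ w₂ w₃ w₄ : ℕ}
    (hsum : x₁ + x₂ = x₃ + x₄)
    (e₁ : x₁.val = p * w₁) (e₂ : x₂.val = p * w₂) (e₃ : x₃.val = p * w₃) (e₄ : x₄.val = p * w₄) :
    (w₁ : ZMod n) + (w₂ : ZMod n) = (w₃ : ZMod n) + (w₄ : ZMod n) := by
  haveI : NeZero (p*n) := ⟨Nat.mul_ne_zero hp.ne' hn.ne'⟩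
  have hmod : (x₁.val + x₂.val) ≡ (x₃.val + x₄.val) [MOD p*n] := by
    apply (ZMod.natCast_eq_natCast_iff _ _ _).mp
    push_cast [ZMod.natCast_zmod_val]
    exact hsum
  have hdd : ((p*n : ℕ) : ℤ) ∣ ((x₃.val + x₄.val : ℕ) : ℤ) - ((x₁.val + x₂.val : ℕ) : ℤ) :=
    (Nat.modEq_iff_dvd).mp hmod
  have hdn : (n : ℤ) ∣ ((w₃ + w₄ : ℕ) : ℤ) - ((w₁ + w₂ : ℕ) : ℤ) := by
    have hrw : ((x₃.val + x₄.val : ℕ) : ℤ) - ((x₁.val + x₂.val : ℕ) : ℤ)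
        = (p : ℤ) * (((w₃ + w₄ : ℕ) : ℤ) - ((w₁ + w₂ : ℕ) : ℤ)) := by
      push_cast [e₁, e₂, e₃, e₄]; ring
    rw [hrw] at hdd
    push_cast at hdd
    exact (mul_dvd_mul_iff_left (by exact_mod_cast hp.ne' : (p:ℤ) ≠ 0)).mp hdd
  have hweq : ((w₁ + w₂ : ℕ) : ZMod n) = ((w₃ + w₄ : ℕ) : ZMod n) :=
    (ZMod.natCast_eq_natCast_iff _ _ _).mpr ((Nat.modEq_iff_dvd).mpr hdn)
  exact_mod_cast hweq

lemma newc_norainbow (hp : 0 < p) (hn : 0 < n) (hcn : ¬ HasRainbowSidon c) :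
    ¬ HasRainbowSidon (newc p n r c) := by
  rintro ⟨x₁, x₂, x₃, x₄, hsum, h12, h13, h14, h23, h24, h34⟩
  have hg : gmap p n x₁ + gmap p n x₂ = gmap p n x₃ + gmap p n x₄ := by
    rw [← map_add, ← map_add, hsum]
  by_cases h1 : gmap p n x₁ = 0 <;> by_cases h2 : gmap p n x₂ = 0 <;>
    by_cases h3 : gmap p n x₃ = 0 <;> by_cases h4 : gmap p n x₄ = 0
  -- TTTT : the main case
  · obtain ⟨w₁, e₁⟩ := (gmap_zero_iff hp hn x₁).mp h1
    obtain ⟨w₂, e₂⟩ := (gmap_zero_iff hp hn x₂).mp h2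
    obtain ⟨w₃, e₃⟩ := (gmap_zero_iff hp hn x₃).mp h3
    obtain ⟨w₄, e₄⟩ := (gmap_zero_iff hp hn x₄).mp h4
    have hc1 := newc_zero (c := c) hp h1 e₁
    have hc2 := newc_zero (c := c) hp h2 e₂
    have hc3 := newc_zero (c := c) hp h3 e₃
    have hc4 := newc_zero (c := c) hp h4 e₄
    apply hcn
    refine ⟨(w₁ : ZMod n), (w₂ : ZMod n), (w₃ : ZMod n), (w₄ : ZMod n),
      sum_transfer hp hn hsum e₁ e₂ e₃ e₄, ?_, ?_, ?_, ?_, ?_, ?_⟩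
    · exact fun he => h12 (by rw [hc1, hc2, he])
    · exact fun he => h13 (by rw [hc1, hc3, he])
    · exact fun he => h14 (by rw [hc1, hc4, he])
    · exact fun he => h23 (by rw [hc2, hc3, he])
    · exact fun he => h24 (by rw [hc2, hc4, he])
    · exact fun he => h34 (by rw [hc3, hc4, he])
  · simp only [h1, h2, h3, zero_add, add_zero] at hg
    exact h4 hg.symm
  · simp only [h1, h2, h4, zero_add, add_zero] at hg
    exact h3 hg.symm
  · simp only [h1, h2, zero_add, add_zero] at hg
    exact h34 (newc_pm h3 h4 (Or.inr (eq_neg_of_add_eq_zero_left hg.symm)))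
  · simp only [h1, h3, h4, zero_add, add_zero] at hg
    exact h2 hg
  · simp only [h1, h3, zero_add, add_zero] at hg
    exact h24 (newc_pm h2 h4 (Or.inl hg))
  · simp only [h1, h4, zero_add, add_zero] at hg
    exact h23 (newc_pm h2 h3 (Or.inl hg))
  · have e1 := newc_cond_iff h2 h3 h23
    have e2 := newc_cond_iff h2 h4 h24
    have e3 := newc_cond_iff h3 h4 h34
    tauto
  · simp only [h2, h3, h4, zero_add, add_zero] at hg
    exact h1 hg
  · simp only [h2, h3, zero_add, add_zero] at hg
    exact h14 (newc_pm h1 h4 (Or.inl hg))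
  · simp only [h2, h4, zero_add, add_zero] at hg
    exact h13 (newc_pm h1 h3 (Or.inl hg))
  · have e1 := newc_cond_iff h1 h3 h13
    have e2 := newc_cond_iff h1 h4 h14
    have e3 := newc_cond_iff h3 h4 h34
    tauto
  · simp only [h3, h4, zero_add, add_zero] at hg
    exact h12 (newc_pm h1 h2 (Or.inr (eq_neg_of_add_eq_zero_left hg)))
  · have e1 := newc_cond_iff h1 h2 h12
    have e2 := newc_cond_iff h1 h4 h14
    have e3 := newc_cond_iff h2 h4 h24
    tauto
  · have e1 := newc_cond_iff h1 h2 h12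
    have e2 := newc_cond_iff h1 h3 h13
    have e3 := newc_cond_iff h2 h3 h23
    tauto
  · have e1 := newc_cond_iff h1 h2 h12
    have e2 := newc_cond_iff h1 h3 h13
    have e3 := newc_cond_iff h2 h3 h23
    tauto

lemma newc_surj (hp : 0 < p) (hp5 : 5 ≤ p) (hn : 0 < n) (hcs : Function.Surjective c) :
    Function.Surjective (newc p n r c) := by
  haveI : NeZero n := ⟨hn.ne'⟩
  haveI : NeZero (p*n) := ⟨Nat.mul_ne_zero hp.ne' hn.ne'⟩
  have hdvd : ∀ a : ℕ, ((a : ZMod p) = 0) → p ∣ a := fun a ha =>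
    (ZMod.natCast_eq_zero_iff a p).mp ha
  have hne01 : (1 : ZMod p) ≠ 0 := by
    intro h0
    have := Nat.le_of_dvd one_pos (hdvd 1 (by exact_mod_cast h0)); omega
  have hcastne : ∀ a b : ℕ, a < p → b < p → a ≠ b → ((a : ZMod p) ≠ (b : ZMod p)) := by
    intro a b ha hb hab he
    have := (ZMod.natCast_eq_natCast_iff a b p).mp he
    rw [Nat.ModEq, Nat.mod_eq_of_lt ha, Nat.mod_eq_of_lt hb] at this
    exact hab this
  have hne20 : (2 : ZMod p) ≠ 0 := by
    have := hcastne 2 0 (by omega) (by omega) (by omega); exact_mod_cast this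
  have hne21 : (2 : ZMod p) ≠ 1 := by
    have := hcastne 2 1 (by omega) (by omega) (by omega); exact_mod_cast this
  have hneg1 : (-1 : ZMod p) = ((p-1 : ℕ) : ZMod p) := by
    have hps : ((p : ℕ) : ZMod p) = 0 := ZMod.natCast_self p
    push_cast [Nat.cast_sub (by omega : 1 ≤ p)]
    rw [hps]; ring
  have hne2neg1 : (2 : ZMod p) ≠ -1 := by
    rw [hneg1]
    have := hcastne 2 (p-1) (by omega) (by omega) (by omega); exact_mod_cast this
  intro t
  by_cases htr : t.val < r
  · obtain ⟨v, hv⟩ := hcs ⟨t.val, htr⟩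
    refine ⟨((p * v.val : ℕ) : ZMod (p*n)), ?_⟩
    have hvlt : p * v.val < p * n := (Nat.mul_lt_mul_left hp).mpr (ZMod.val_lt v)
    have hval : (((p * v.val : ℕ) : ZMod (p*n))).val = p * v.val :=
      ZMod.val_cast_of_lt hvlt
    have hg : gmap p n ((p * v.val : ℕ) : ZMod (p*n)) = 0 := by
      rw [gmap_eq hp hn, hval]
      exact (ZMod.natCast_eq_zero_iff _ p).mpr ⟨v.val, rfl⟩
    rw [newc_zero hp hg hval, ZMod.natCast_zmod_val, hv]
    exact Fin.ext rfl
  · by_cases htr1 : t.val = r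
    · refine ⟨(1 : ZMod (p*n)), ?_⟩
      have hg1 : gmap p n (1 : ZMod (p*n)) = 1 := map_one _
      unfold newc
      rw [if_neg (by rw [hg1]; exact hne01), if_pos (by rw [hg1]; exact Or.inl rfl)]
      exact Fin.ext htr1.symm
    · have htr2 : t.val = r + 1 := by have := t.isLt; omega
      refine ⟨(2 : ZMod (p*n)), ?_⟩
      have hg2 : gmap p n (2 : ZMod (p*n)) = 2 := by
        rw [show (2 : ZMod (p*n)) = 1 + 1 by norm_num, map_add, map_one]; norm_num
      unfold newc
      rw [if_neg (by rw [hg2]; exact hne20),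
        if_neg (by rw [hg2]; rintro (h | h); exacts [hne21 h, hne2neg1 h])]
      exact Fin.ext htr2.symm

end Aux

theorem expand_coloring_large_prime (p n r : ℕ) (hp : p.Prime) (hp5 : 5 ≤ p) (hn : 0 < n)
    (h : ∃ c : ZMod n → Fin r, Function.Surjective c ∧ ¬ HasRainbowSidon c) :
    ∃ c' : ZMod (p * n) → Fin (r + 2), Function.Surjective c' ∧ ¬ HasRainbowSidon c' := by
  obtain ⟨c, hcs, hcn⟩ := h
  exact ⟨newc p n r c, newc_surj hp.pos hp5 hn hcs, newc_norainbow hp.pos hn hcn⟩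
end

section
/- Let n = p₁⋯p_k be a prime factorization of n with p_i ≤ p_j whenever i < j. Let m be the smallest index with p_m ≥ 3 (or m = k if no such index exists), let f₁ = |{p_i : p_i ≤ 3, i ≠ m}| and f₂ = |{p_i : p_i ≥ 5, i ≠ m}| (counted with multiplicity). Then rb(Z_{p_m},S) + f₁ + 2f₂ ≤ rb(Z_n,S). -/
/-!
Start from a rainbow-free exact coloring of `ℤ_q`, `q = p_m`, with `rb(ℤ_q, S) - 1` colors and
multiply in the remaining primes one at a time. Passing from `ℤ_M` to `ℤ_{pM}`, the multiples of
`p` form a copy of `ℤ_M` and keep the old coloring, while every other `x` receives one of at most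
two new colors depending only on `±(x mod p)`: one color if `p ≤ 3`, two (`±1` and the rest) if
`p ≥ 5`. Reducing a Sidon solution mod `p`, either all four terms lie in the copy of `ℤ_M`, or
exactly two lie outside it with residues equal up to sign, or at least three lie outside it and
two of them share a color; so no rainbow solution appears.
-/

open Function Finset

def RainbowFreeColorable (n r : ℕ) : Prop :=
  ∃ c : ZMod n → Fin r, Surjective c ∧ ¬HasRainbowSidon c

theorem HasRainbowSidon.of_comp {n : ℕ} {α β : Type*} {c : ZMod n → α} (g : α → β)
    (h : HasRainbowSidon (g ∘ c)) : HasRainbowSidon c := by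
  obtain ⟨x₁, x₂, x₃, x₄, hsum, h₁₂, h₁₃, h₁₄, h₂₃, h₂₄, h₃₄⟩ := h
  exact ⟨x₁, x₂, x₃, x₄, hsum, ne_of_apply_ne g h₁₂, ne_of_apply_ne g h₁₃, ne_of_apply_ne g h₁₄,
    ne_of_apply_ne g h₂₃, ne_of_apply_ne g h₂₄, ne_of_apply_ne g h₃₄⟩

namespace RainbowFreeColorable

variable {n r s : ℕ}

theorem of_surjective {α : Type*} [Fintype α] {c : ZMod n → α} (hc : Surjective c)
    (h : ¬HasRainbowSidon c) : RainbowFreeColorable n (Fintype.card α) :=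
  ⟨Fintype.equivFin α ∘ c, (Fintype.equivFin α).surjective.comp hc,
    fun h' => h (h'.of_comp _)⟩

theorem mono (h : RainbowFreeColorable n r) (hs : 0 < s) (hsr : s ≤ r) :
    RainbowFreeColorable n s := by
  obtain ⟨c, hc, hfree⟩ := h
  let merge : Fin r → Fin s := fun j => ⟨min j (s - 1), by omega⟩
  have hmerge : Surjective merge := fun j => ⟨Fin.castLE hsr j, Fin.ext (by simp [merge]; omega)⟩
  exact ⟨merge ∘ c, hmerge.comp hc, fun h' => hfree (h'.of_comp _)⟩

theorem one [NeZero n] : RainbowFreeColorable n 1 :=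
  ⟨fun _ => 0, fun _ => ⟨0, Subsingleton.elim _ _⟩,
    fun ⟨_, _, _, _, _, h₁₂, _⟩ => h₁₂ rfl⟩

end RainbowFreeColorable

theorem rbSidon_set_nonempty (n : ℕ) [NeZero n] :
    {r : ℕ | 0 < r ∧ ∀ c : ZMod n → Fin r, Surjective c → HasRainbowSidon c}.Nonempty :=
  ⟨n + 1, n.succ_pos, fun c hc => absurd (Fintype.card_le_of_surjective c hc) (by simp)⟩

theorem rainbowFreeColorable_iff_lt_rbSidon {n r : ℕ} [NeZero n] (hr : 0 < r) :
    RainbowFreeColorable n r ↔ r < rbSidon n := by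
  constructor
  · intro h
    obtain ⟨hpos, hrainbow⟩ := Nat.sInf_mem (rbSidon_set_nonempty n)
    by_contra! hle
    obtain ⟨c, hc, hfree⟩ := h.mono hpos hle
    exact hfree (hrainbow c hc)
  · intro h
    have := Nat.notMem_of_lt_sInf h
    simp only [Set.mem_ofPred_eq, not_and, not_forall] at this
    obtain ⟨c, hc, hfree⟩ := this hr
    exact ⟨c, hc, hfree⟩

theorem one_lt_rbSidon (n : ℕ) [NeZero n] : 1 < rbSidon n :=
  (rainbowFreeColorable_iff_lt_rbSidon one_pos).1 .one

theorem rainbowFreeColorable_rbSidon_sub_one (n : ℕ) [NeZero n] :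
    RainbowFreeColorable n (rbSidon n - 1) := by
  have := one_lt_rbSidon n
  exact (rainbowFreeColorable_iff_lt_rbSidon (by omega)).2 (by omega)

section Extension

variable {M N k : ℕ} {α B F : Type*} [AddCommGroup B] [FunLike F (ZMod N) B] {ι : ZMod M →+ ZMod N}
  {π : F}

theorem surjective_extend (hι : Injective ι) (hexact : Exact ι π) (hπ : Surjective π)
    {β : Type*} {c : ZMod M → α} (hc : Surjective c) {d : B → β}
    (hd : ∀ j, ∃ b ≠ 0, d b = j) : Surjective (extend ι (Sum.inl ∘ c) (Sum.inr ∘ d ∘ π)) := by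
  rintro (a | j)
  · obtain ⟨y, rfl⟩ := hc a
    exact ⟨ι y, hι.extend_apply _ _ y⟩
  · obtain ⟨b, hb, rfl⟩ := hd j
    obtain ⟨x, rfl⟩ := hπ b
    exact ⟨x, extend_apply' _ _ x fun hmem => hb ((hexact x).2 hmem)⟩

variable [AddMonoidHomClass F (ZMod N) B]

theorem not_hasRainbowSidon_extend (hι : Injective ι) (hexact : Exact ι π) {c : ZMod M → α}
    (hc : ¬HasRainbowSidon c) {d : B → Fin k} (hd : ∀ b, d (-b) = d b) (hk : k ≤ 2) :
    ¬HasRainbowSidon (extend ι (Sum.inl ∘ c) (Sum.inr ∘ d ∘ π)) := by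
  set e := extend ι (Sum.inl ∘ c) (Sum.inr ∘ d ∘ π)
  have he_ker (y : ZMod M) : e (ι y) = .inl (c y) := hι.extend_apply _ _ y
  have he_out (x : ZMod N) (hx : π x ≠ 0) : e x = .inr (d (π x)) :=
    extend_apply' _ _ x fun hmem => hx ((hexact x).2 hmem)
  have two (x y : ZMod N) (hx : π x ≠ 0) (hy : π y ≠ 0) (hxy : π x = π y ∨ π x = -π y) :
      e x = e y := by
    rw [he_out x hx, he_out y hy]
    rcases hxy with h | h <;> simp [h, hd]
  have three (x y z : ZMod N) (hx : π x ≠ 0) (hy : π y ≠ 0) (hz : π z ≠ 0) :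
      e x = e y ∨ e x = e z ∨ e y = e z := by
    simp only [he_out _ hx, he_out _ hy, he_out _ hz, Sum.inr.injEq, Fin.ext_iff]
    omega
  rintro ⟨x₁, x₂, x₃, x₄, hsum, h₁₂, h₁₃, h₁₄, h₂₃, h₂₄, h₃₄⟩
  have hπsum : π x₁ + π x₂ = π x₃ + π x₄ := by rw [← map_add, ← map_add, hsum]
  by_cases hker : π x₁ = 0 ∧ π x₂ = 0 ∧ π x₃ = 0 ∧ π x₄ = 0
  · obtain ⟨k₁, k₂, k₃, k₄⟩ := hker
    obtain ⟨y₁, rfl⟩ := (hexact _).1 k₁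
    obtain ⟨y₂, rfl⟩ := (hexact _).1 k₂
    obtain ⟨y₃, rfl⟩ := (hexact _).1 k₃
    obtain ⟨y₄, rfl⟩ := (hexact _).1 k₄
    simp only [he_ker, ne_eq, Sum.inl.injEq] at h₁₂ h₁₃ h₁₄ h₂₃ h₂₄ h₃₄
    exact hc ⟨y₁, y₂, y₃, y₄, hι (by simpa using hsum), h₁₂, h₁₃, h₁₄, h₂₃, h₂₄, h₃₄⟩
  -- Some term lies off the kernel; by `hπsum`, `two` and `three` cover every such configuration.
  · grind

end Extension

namespace ZMod

variable (p M : ℕ)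

def mulLeftHom : ZMod M →+ ZMod (p * M) :=
  ZMod.lift M ⟨(AddMonoidHom.mulLeft (p : ZMod (p * M))).comp (Int.castAddHom _), by
    simp [← Nat.cast_mul]⟩

variable {p M}

theorem mulLeftHom_intCast (j : ℤ) : mulLeftHom p M j = ((p * j : ℤ) : ZMod (p * M)) := by
  simp [mulLeftHom]

theorem mulLeftHom_injective (hp : p ≠ 0) : Injective (mulLeftHom p M) := by
  refine (injective_iff_map_eq_zero _).2 fun y hy => ?_
  obtain ⟨j, rfl⟩ := intCast_surjective y
  rw [mulLeftHom_intCast, intCast_zmod_eq_zero_iff_dvd, Nat.cast_mul,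
    mul_dvd_mul_iff_left (by exact_mod_cast hp)] at hy
  exact (intCast_zmod_eq_zero_iff_dvd j M).2 hy

theorem exact_mulLeftHom_castHom :
    Exact (mulLeftHom p M) (castHom (dvd_mul_right p M) (ZMod p)) := by
  intro x
  constructor
  · obtain ⟨j, rfl⟩ := intCast_surjective x
    rw [map_intCast, intCast_zmod_eq_zero_iff_dvd]
    rintro ⟨t, rfl⟩
    exact ⟨t, mulLeftHom_intCast t⟩
  · rintro ⟨y, rfl⟩
    obtain ⟨t, rfl⟩ := intCast_surjective y
    simp [mulLeftHom_intCast]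

end ZMod

theorem RainbowFreeColorable.mul_left {p M s k : ℕ} (h : RainbowFreeColorable M s)
    (hp : p ≠ 0) {d : ZMod p → Fin k} (hd_neg : ∀ b, d (-b) = d b)
    (hd_surj : ∀ j, ∃ b ≠ 0, d b = j) (hk : k ≤ 2) : RainbowFreeColorable (p * M) (s + k) := by
  obtain ⟨c, hc, hfree⟩ := h
  have hι := ZMod.mulLeftHom_injective (M := M) hp
  have hexact := ZMod.exact_mulLeftHom_castHom (p := p) (M := M)
  simpa using RainbowFreeColorable.of_surjective
    (surjective_extend hι hexact (ZMod.ringHom_surjective _) hc hd_surj)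
    (not_hasRainbowSidon_extend hι hexact hfree hd_neg hk)

def extraColors (p : ℕ) : ℕ := if p ≤ 3 then 1 else 2

theorem ZMod.exists_neg_invariant_coloring {p : ℕ} (hp : 2 ≤ p) :
    ∃ d : ZMod p → Fin (extraColors p), (∀ b, d (-b) = d b) ∧ ∀ j, ∃ b ≠ 0, d b = j := by
  have : Nontrivial (ZMod p) := ZMod.nontrivial_iff.2 (by omega)
  by_cases hp3 : p ≤ 3
  · rw [extraColors, if_pos hp3]
    exact ⟨0, fun _ => rfl, fun _ => ⟨1, one_ne_zero, Subsingleton.elim _ _⟩⟩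
  · have hcast (j : ℕ) (hj : 0 < j) (hjp : j < p) : (j : ZMod p) ≠ 0 := by
      rw [Ne, ZMod.natCast_eq_zero_iff]
      exact fun hdvd => absurd (Nat.le_of_dvd hj hdvd) (by omega)
    rw [extraColors, if_neg hp3]
    have h2 : (2 : ZMod p) ≠ 1 ∧ (2 : ZMod p) ≠ -1 := by
      refine ⟨fun h => hcast 1 (by omega) (by omega) ?_, fun h => hcast 3 (by omega) (by omega) ?_⟩ <;>
        · push_cast; linear_combination h
    refine ⟨fun b => if b = 1 ∨ b = -1 then 0 else 1, fun b => by simp [neg_eq_iff_eq_neg, or_comm],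
      Fin.forall_fin_two.2 ⟨⟨1, one_ne_zero, by simp⟩, ⟨2, ?_, by simp [h2]⟩⟩⟩
    exact_mod_cast hcast 2 (by omega) (by omega)

theorem RainbowFreeColorable.prod_mul {ι : Type*} [DecidableEq ι] {M s : ℕ} (S : Finset ι)
    (P : ι → ℕ) (hP : ∀ i ∈ S, 2 ≤ P i) (h : RainbowFreeColorable M s) :
    RainbowFreeColorable ((∏ i ∈ S, P i) * M) (s + ∑ i ∈ S, extraColors (P i)) := by
  induction S using Finset.induction_on with
  | empty => simpa using h
  | insert a S ha ih =>
    have hPa := hP a (mem_insert_self a S)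
    obtain ⟨d, hd_neg, hd_surj⟩ := ZMod.exists_neg_invariant_coloring hPa
    have hk : extraColors (P a) ≤ 2 := by unfold extraColors; split_ifs <;> omega
    have := (ih fun i hi => hP i (mem_insert_of_mem hi)).mul_left (by omega) hd_neg hd_surj hk
    rwa [Finset.prod_insert ha, Finset.sum_insert ha, mul_assoc, add_left_comm, add_comm]

theorem sum_extraColors_eq {ι : Type*} (S : Finset ι) (P : ι → ℕ) (hP : ∀ i ∈ S, (P i).Prime) :
    ∑ i ∈ S, extraColors (P i) = #(S.filter (P · ≤ 3)) + 2 * #(S.filter (5 ≤ P ·)) := by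
  have h4 : ∀ i ∈ S, ¬P i ≤ 3 ↔ 5 ≤ P i := fun i hi => by
    have : P i ≠ 4 := fun h => absurd (h ▸ hP i hi) (by norm_num)
    omega
  simp only [extraColors, sum_ite, sum_const, smul_eq_mul, mul_one, filter_congr h4]
  ring

theorem rb_zmod_n_sidon_lower_bound_general (n : ℕ) (l : List ℕ)
    (hprime : ∀ p ∈ l, p.Prime) (hprod : n = l.prod)
    (m : Fin l.length)
    (f₁ f₂ : ℕ)
    (hf₁ : f₁ = (Finset.univ.filter fun i : Fin l.length => i ≠ m ∧ l.get i ≤ 3).card)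
    (hf₂ : f₂ = (Finset.univ.filter fun i : Fin l.length => i ≠ m ∧ 5 ≤ l.get i).card) :
    rbSidon (l.get m) + f₁ + 2 * f₂ ≤ rbSidon n := by
  have hl (i : Fin l.length) : (l.get i).Prime := hprime _ (l.get_mem i)
  have : NeZero (l.get m) := ⟨(hl m).ne_zero⟩
  have : NeZero n := ⟨hprod ▸ List.prod_ne_zero fun h0 => Nat.not_prime_zero (hprime 0 h0)⟩
  have hprod' : ∏ i, l.get i = n := hprod ▸ Fin.prod_univ_getElem l
  have hn := (rainbowFreeColorable_rbSidon_sub_one (l.get m)).prod_mul (univ.erase m) l.get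
    fun i _ => (hl i).two_le
  rw [prod_erase_mul _ _ (mem_univ m), hprod', sum_extraColors_eq _ _ fun i _ => hl i] at hn
  have hone := one_lt_rbSidon (l.get m)
  have hlt := (rainbowFreeColorable_iff_lt_rbSidon (by omega)).1 hn
  rw [hf₁, hf₂, ← filter_filter, ← filter_filter, filter_ne']
  omega

theorem rb_zmod_n_sidon_lower_bound (n : ℕ) (l : List ℕ) (hne : l ≠ [])
    (hprime : ∀ p ∈ l, p.Prime) (hsorted : l.Pairwise (· ≤ ·)) (hprod : n = l.prod)
    (m : Fin l.length)
    (hm₁ : (∃ i : Fin l.length, 3 ≤ l.get i) →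
      (3 ≤ l.get m ∧ ∀ i : Fin l.length, 3 ≤ l.get i → m ≤ i))
    (hm₂ : (∀ i : Fin l.length, l.get i < 3) → (m : ℕ) = l.length - 1)
    (f₁ f₂ : ℕ)
    (hf₁ : f₁ = (Finset.univ.filter fun i : Fin l.length => i ≠ m ∧ l.get i ≤ 3).card)
    (hf₂ : f₂ = (Finset.univ.filter fun i : Fin l.length => i ≠ m ∧ 5 ≤ l.get i).card) :
    rbSidon (l.get m) + f₁ + 2 * f₂ ≤ rbSidon n :=
  rb_zmod_n_sidon_lower_bound_general n l hprime hprod m f₁ f₂ hf₁ hf₂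
end

section
/- Let p be a prime divisor of n, let t = n/p, and let c be a rainbow Sidon free coloring of Z_n. For 0 ≤ i < t let R_i = i + ⟨t⟩ denote the i-th coset of the subgroup of Z_n generated by t. Then there exists an index j with 0 ≤ j < t such that |c(R_i) \ c(R_j)| ≤ 1 for all 0 ≤ i < t, where c(A) denotes the set of colors used on A. -/
open AddSubgroup

lemma AddSubgroup.mem_zmultiples_of_mem_of_prime_card {G : Type*} [AddGroup G]
    {H : AddSubgroup G} (hH : (Nat.card H).Prime) {d y : G} (hd : d ∈ H) (hd0 : d ≠ 0)
    (hy : y ∈ H) : y ∈ zmultiples d := by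
  have := Fact.mk hH
  obtain ⟨k, hk⟩ := mem_zmultiples_of_prime_card (G := H) rfl (g := ⟨d, hd⟩) (g' := ⟨y, hy⟩)
    (by simpa using hd0)
  exact ⟨k, congrArg Subtype.val hk⟩

section Periodic

variable {G α : Type*} [AddCommGroup G] {H : AddSubgroup G} (c : G → α) {d j : G}

lemma apply_add_zsmul_eq_of_periodic_on_coset (hd : d ∈ H)
    (hper : ∀ y, y - j ∈ H → c (y + d) = c y) {y : G} (hy : y - j ∈ H) (k : ℤ) :
    c (y + k • d) = c y := by
  have hmem : ∀ k : ℤ, y + k • d - j ∈ H := fun k => by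
    rw [add_sub_right_comm]; exact H.add_mem hy (H.zsmul_mem hd k)
  induction k using Int.induction_on with
  | zero => simp
  | succ k ih => rw [add_zsmul, one_zsmul, ← add_assoc, hper _ (hmem k), ih]
  | pred k ih =>
    have h := hper _ (hmem (-k - 1))
    rw [add_assoc, ← add_one_zsmul, sub_add_cancel] at h
    rw [← h, ih]

lemma image_coset_subsingleton_of_periodic (hH : (Nat.card H).Prime) (hd : d ∈ H)
    (hd0 : d ≠ 0) (hper : ∀ y, y - j ∈ H → c (y + d) = c y) :
    (c '' {x | x - j ∈ H}).Subsingleton := by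
  rintro _ ⟨y, hy, rfl⟩ _ ⟨z, hz, rfl⟩
  obtain ⟨k, hk : k • d = z - y⟩ := mem_zmultiples_of_mem_of_prime_card hH hd hd0
    (show z - y ∈ H by simpa using H.sub_mem hz hy)
  rw [← apply_add_zsmul_eq_of_periodic_on_coset c hd hper hy k, hk, add_sub_cancel]

end Periodic

section Sidon

variable {n : ℕ} {α : Type*} {c : ZMod n → α}

lemma apply_eq_of_add_eq_add_of_not_hasRainbowSidon (hfree : ¬ HasRainbowSidon c)
    {S : Set (ZMod n)} {x x' y z : ZMod n} (hsum : x + y = x' + z) (hxx' : c x ≠ c x')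
    (hx : c x ∉ c '' S) (hx' : c x' ∉ c '' S) (hy : y ∈ S) (hz : z ∈ S) : c y = c z := by
  have hne : ∀ {a w}, c a ∉ c '' S → w ∈ S → c a ≠ c w := fun ha hw h =>
    ha ⟨_, hw, h.symm⟩
  by_contra hyz
  exact hfree ⟨x, y, x', z, hsum, hne hx hy, hxx', hne hx hz, Ne.symm (hne hx' hy),
    hyz, hne hx' hz⟩

lemma image_coset_subsingleton_of_not_hasRainbowSidon (hfree : ¬ HasRainbowSidon c)
    {H : AddSubgroup (ZMod n)} (hH : (Nat.card H).Prime) {i j : ZMod n}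
    (h : (c '' {x | x - i ∈ H} \ c '' {x | x - j ∈ H}).Nontrivial) :
    (c '' {x | x - j ∈ H}).Subsingleton := by
  obtain ⟨_, ⟨⟨x, hx, rfl⟩, hxj⟩, _, ⟨⟨x', hx', rfl⟩, hx'j⟩, hxx'⟩ := h
  have hd : x - x' ∈ H := by simpa using H.sub_mem hx hx'
  refine image_coset_subsingleton_of_periodic c hH hd
    (sub_ne_zero.mpr fun h => hxx' (congrArg c h)) fun y hy => ?_
  exact (apply_eq_of_add_eq_add_of_not_hasRainbowSidon hfree (by abel) hxx' hxj hx'j hy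
    (show y + (x - x') - j ∈ H by rw [add_sub_right_comm]; exact H.add_mem hy hd)).symm

end Sidon

lemma Set.exists_forall_diff_subsingleton {ι β : Type*} {T : ι → Set β} {P : ι → Prop}
    (hP : ∃ j, P j) (h : ∀ i j, (T i \ T j).Nontrivial → (T j).Subsingleton) :
    ∃ j, P j ∧ ∀ i, P i → (T i \ T j).Subsingleton := by
  obtain ⟨j₀, hj₀⟩ := hP
  by_contra! hcon
  obtain ⟨i₀, hi₀, hns₀⟩ := hcon j₀ hj₀
  obtain ⟨i₁, -, hns₁⟩ := hcon i₀ hi₀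
  exact hns₀.not_subsingleton ((h i₁ i₀ hns₁).anti Set.sdiff_subset)

lemma ZMod.setOf_exists_eq_add_mul {n : ℕ} (i a : ZMod n) :
    {x : ZMod n | ∃ s : ZMod n, x = i + s * a} = {x | x - i ∈ zmultiples a} := by
  ext x
  simp only [mem_zmultiples_iff, zsmul_eq_mul, eq_sub_iff_add_eq']
  constructor
  · rintro ⟨s, hs⟩
    obtain ⟨k, rfl⟩ := ZMod.intCast_surjective s
    exact ⟨k, hs.symm⟩
  · rintro ⟨k, hk⟩
    exact ⟨k, hk.symm⟩

lemma ZMod.card_zmultiples_natCast_mul (p : ℕ) {t : ℕ} (ht : t ≠ 0) :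
    Nat.card (zmultiples (t : ZMod (p * t))) = p := by
  rw [Nat.card_zmultiples, ZMod.addOrderOf_coe' _ ht, Nat.gcd_mul_left_left,
    Nat.mul_div_cancel _ (Nat.pos_of_ne_zero ht)]

theorem exists_maximum_coset (n p t : ℕ) (hn : 0 < n) (hp : p.Prime) (hdvd : p ∣ n)
    (ht : t = n / p) {α : Type*} (c : ZMod n → α) (hfree : ¬ HasRainbowSidon c)
    (R : ℕ → Set (ZMod n))
    (hR : ∀ i, R i = {x : ZMod n | ∃ s : ZMod n, x = (i : ZMod n) + s * (t : ZMod n)}) :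
    ∃ j < t, ∀ i < t, (c '' R i \ c '' R j).Subsingleton := by
  obtain ⟨m, rfl⟩ := hdvd
  obtain rfl : t = m := by rw [ht, Nat.mul_div_cancel_left m hp.pos]
  have ht0 : t ≠ 0 := by rintro rfl; simp at hn
  have hcard := ZMod.card_zmultiples_natCast_mul p ht0
  simp only [hR, ZMod.setOf_exists_eq_add_mul]
  exact Set.exists_forall_diff_subsingleton ⟨0, Nat.pos_of_ne_zero ht0⟩ fun i j h =>
    image_coset_subsingleton_of_not_hasRainbowSidon hfree (hcard.symm ▸ hp) h
end

section
/- Let p be a prime divisor of n and let t = n/p. Then rb(Z_n,S) ≤ rb(Z_p,S) + rb(Z_t,S) − 2. -/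
/-!
Let `π : ℤ_n → ℤ_p` be reduction mod `p`; its fibres are cosets of `pℤ_n ≅ ℤ_t`. Fix a colouring
`c` of `ℤ_n` without rainbow solutions. On each fibre it is a colouring of `ℤ_t`, so each fibre
carries fewer than `rb(ℤ_t)` colours. Let `F` be a fibre with the most colours. Two colours
outside `F` cannot share a fibre: maximality yields two colours of `F` missing from that fibre,
and the absence of rainbow solutions `u + x = v + (x + (u - v))` forces enough translation
invariance to make the two colours equal. So colouring each fibre by its colour outside `F` (or by
one new colour) gives a colouring of `ℤ_p` whose rainbow solutions lift to `c`; it uses fewer than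
`rb(ℤ_p)` colours, and hence `c` uses at most `rb(ℤ_p) + rb(ℤ_t) - 3`.
-/

open Finset Function

variable {n m t : ℕ} {α : Type*}

def IsRainbowSidon (c : ZMod n → α) (x₁ x₂ x₃ x₄ : ZMod n) : Prop :=
  x₁ + x₂ = x₃ + x₄ ∧ c x₁ ≠ c x₂ ∧ c x₁ ≠ c x₃ ∧ c x₁ ≠ c x₄ ∧
    c x₂ ≠ c x₃ ∧ c x₂ ≠ c x₄ ∧ c x₃ ≠ c x₄

namespace IsRainbowSidon

variable {c : ZMod n → α} {x₁ x₂ x₃ x₄ : ZMod n}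

theorem swap_left (h : IsRainbowSidon c x₁ x₂ x₃ x₄) : IsRainbowSidon c x₂ x₁ x₃ x₄ := by
  obtain ⟨hs, h₁₂, h₁₃, h₁₄, h₂₃, h₂₄, h₃₄⟩ := h
  exact ⟨by rw [add_comm, hs], h₁₂.symm, h₂₃, h₂₄, h₁₃, h₁₄, h₃₄⟩

theorem symm (h : IsRainbowSidon c x₁ x₂ x₃ x₄) : IsRainbowSidon c x₃ x₄ x₁ x₂ := by
  obtain ⟨hs, h₁₂, h₁₃, h₁₄, h₂₃, h₂₄, h₃₄⟩ := h
  exact ⟨hs.symm, h₃₄, h₁₃.symm, h₂₃.symm, h₁₄.symm, h₂₄.symm, h₁₂⟩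

theorem swap_right (h : IsRainbowSidon c x₁ x₂ x₃ x₄) : IsRainbowSidon c x₁ x₂ x₄ x₃ :=
  h.symm.swap_left.symm

end IsRainbowSidon

namespace HasRainbowSidon

variable {c : ZMod n → α}

theorem exists_ne (h : HasRainbowSidon c) (a : α) :
    ∃ x₁ x₂ x₃ x₄, IsRainbowSidon c x₁ x₂ x₃ x₄ ∧ c x₁ ≠ a ∧ c x₂ ≠ a ∧ c x₃ ≠ a := by
  obtain ⟨x₁, x₂, x₃, x₄, h⟩ := h
  have h' : IsRainbowSidon c x₁ x₂ x₃ x₄ := h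
  obtain ⟨-, h₁₂, h₁₃, h₁₄, h₂₃, h₂₄, h₃₄⟩ := h
  by_cases h₁ : c x₁ = a
  · subst h₁
    exact ⟨x₃, x₄, x₂, x₁, h'.symm.swap_right, h₁₃.symm, h₁₄.symm, h₁₂.symm⟩
  by_cases h₂ : c x₂ = a
  · subst h₂
    exact ⟨x₃, x₄, x₁, x₂, h'.symm, h₂₃.symm, h₂₄.symm, h₁₂⟩
  by_cases h₃ : c x₃ = a
  · subst h₃
    exact ⟨x₁, x₂, x₄, x₃, h'.swap_right, h₁₃, h₂₃, h₃₄.symm⟩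
  exact ⟨x₁, x₂, x₃, x₄, h', h₁, h₂, h₃⟩

theorem of_comp_s14 {β : Type*} {f : α → β} (h : HasRainbowSidon (f ∘ c)) : HasRainbowSidon c := by
  obtain ⟨x₁, x₂, x₃, x₄, hs, h₁₂, h₁₃, h₁₄, h₂₃, h₂₄, h₃₄⟩ := h
  exact ⟨x₁, x₂, x₃, x₄, hs, ne_of_apply_ne f h₁₂, ne_of_apply_ne f h₁₃, ne_of_apply_ne f h₁₄,
    ne_of_apply_ne f h₂₃, ne_of_apply_ne f h₂₄, ne_of_apply_ne f h₃₄⟩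

theorem of_add_addMonoidHom (φ : ZMod t →+ ZMod n) (x₀ : ZMod n)
    (h : HasRainbowSidon fun a => c (x₀ + φ a)) : HasRainbowSidon c := by
  obtain ⟨a₁, a₂, a₃, a₄, hs, hne⟩ := h
  refine ⟨x₀ + φ a₁, x₀ + φ a₂, x₀ + φ a₃, x₀ + φ a₄, ?_, hne⟩
  rw [add_add_add_comm, ← map_add, hs, map_add, add_add_add_comm]

end HasRainbowSidon

theorem rbSidon_mem (hm : 0 < m) :
    0 < rbSidon m ∧ ∀ c : ZMod m → Fin (rbSidon m), Surjective c → HasRainbowSidon c := by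
  have : NeZero m := ⟨hm.ne'⟩
  refine Nat.sInf_mem (s := {r | 0 < r ∧ ∀ c : ZMod m → Fin r, Surjective c → HasRainbowSidon c})
    ⟨m + 1, m.succ_pos, fun c hc => ?_⟩
  have := Fintype.card_le_of_surjective c hc
  simp at this

theorem rbSidon_pos (hm : 0 < m) : 0 < rbSidon m := (rbSidon_mem hm).1

theorem hasRainbowSidon_of_surjective (hm : 0 < m) {c : ZMod m → Fin (rbSidon m)}
    (hc : Surjective c) : HasRainbowSidon c :=
  (rbSidon_mem hm).2 c hc

theorem rbSidon_le {r : ℕ} (hr : 0 < r)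
    (h : ∀ c : ZMod n → Fin r, Surjective c → HasRainbowSidon c) : rbSidon n ≤ r :=
  Nat.sInf_le ⟨hr, h⟩

theorem two_le_rbSidon (hm : 0 < m) : 2 ≤ rbSidon m := by
  have hpos := rbSidon_pos hm
  by_contra! h
  obtain ⟨_, _, _, _, -, h₁₂, -⟩ := hasRainbowSidon_of_surjective hm
    (c := fun _ => ⟨0, hpos⟩) fun j => ⟨0, Fin.ext (by have := j.isLt; change 0 = j.val; omega)⟩
  exact h₁₂ rfl

theorem HasRainbowSidon.of_card_le (hm : 0 < m) {g : ZMod m → α} {s : Finset α}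
    (hs : ↑s ⊆ Set.range g) (hcard : rbSidon m ≤ #s) : HasRainbowSidon g := by
  obtain ⟨v⟩ : Nonempty (Fin (rbSidon m) ↪ s) :=
    Function.Embedding.nonempty_of_card_le (by simpa using hcard)
  have : Nonempty (Fin (rbSidon m)) := ⟨⟨0, rbSidon_pos hm⟩⟩
  have hv : Injective fun j => (v j : α) := Subtype.val_injective.comp v.injective
  refine HasRainbowSidon.of_comp_s14 (f := invFun fun j => (v j : α))
    (hasRainbowSidon_of_surjective hm fun j => ?_)
  obtain ⟨x, hx⟩ := hs (v j).2
  exact ⟨x, by simp only [comp_apply, hx, leftInverse_invFun hv j]⟩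

section Fibers

variable [NeZero n] [DecidableEq α] (π : ZMod n →+ ZMod m) (c : ZMod n → α)

def fiberColors (i : ZMod m) : Finset α := (univ.filter (π · = i)).image c

variable {π c}

theorem mem_fiberColors {i : ZMod m} {b : α} :
    b ∈ fiberColors π c i ↔ ∃ x, π x = i ∧ c x = b := by
  simp [fiberColors]

theorem apply_mem_fiberColors (x : ZMod n) : c x ∈ fiberColors π c (π x) :=
  mem_fiberColors.2 ⟨x, rfl, rfl⟩

theorem card_fiberColors_lt (hc : ¬HasRainbowSidon c) (ht : 0 < t) (φ : ZMod t →+ ZMod n)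
    (hφ : π.ker ≤ φ.range) (i : ZMod m) : #(fiberColors π c i) < rbSidon t := by
  by_contra! h
  obtain ⟨_, hb⟩ := card_pos.1 (lt_of_lt_of_le (rbSidon_pos ht) h)
  obtain ⟨x₀, hx₀, -⟩ := mem_fiberColors.1 hb
  refine hc (.of_add_addMonoidHom φ x₀ (.of_card_le ht (fun b hb => ?_) h))
  obtain ⟨y, hy, rfl⟩ := mem_fiberColors.1 hb
  obtain ⟨a, ha⟩ := hφ (show y - x₀ ∈ π.ker by simp [hy, hx₀])
  exact ⟨a, by simp [ha]⟩

variable (hc : ¬HasRainbowSidon c)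
include hc

/-- `u + x = v + (x + (u - v))` is a rainbow solution unless the two points of the fibre of `x`
have the same colour. -/
theorem apply_add_sub_eq_of_notMem_fiberColors {u v x : ZMod n} (huv : π u = π v) (hne : c u ≠ c v)
    (hu : c u ∉ fiberColors π c (π x)) (hv : c v ∉ fiberColors π c (π x)) :
    c (x + (u - v)) = c x := by
  have h₁ : c x ∈ fiberColors π c (π x) := apply_mem_fiberColors x
  have h₂ : c (x + (u - v)) ∈ fiberColors π c (π x) := by
    simpa [huv] using apply_mem_fiberColors (π := π) (c := c) (x + (u - v))
  by_contra h
  exact hc ⟨u, x, v, x + (u - v), by abel, (ne_of_mem_of_not_mem h₁ hu).symm, hne,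
    (ne_of_mem_of_not_mem h₂ hu).symm, ne_of_mem_of_not_mem h₁ hv, Ne.symm h,
    (ne_of_mem_of_not_mem h₂ hv).symm⟩

/-- Translation by `u - v` preserves colours on the fibre of `x`, so translations by `x - y` and
by `x + (u - v) - y` both preserve colours on the fibre of `u`; compare them at `v`. -/
theorem apply_eq_of_crossed_fibers {u v x y : ZMod n} (huv : π u = π v) (hxy : π x = π y)
    (hne : c x ≠ c y) (hu : c u ∉ fiberColors π c (π x)) (hv : c v ∉ fiberColors π c (π x))
    (hx : c x ∉ fiberColors π c (π u)) (hy : c y ∉ fiberColors π c (π u)) : c u = c v := by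
  by_contra huv'
  have hd : c (x + (u - v)) = c x := apply_add_sub_eq_of_notMem_fiberColors hc huv huv' hu hv
  have h₁ : c (u + (x - y)) = c u := apply_add_sub_eq_of_notMem_fiberColors hc hxy hne hx hy
  have hπ : π (x + (u - v)) = π y := by rw [map_add, map_sub, huv, sub_self, add_zero, hxy]
  have h₂ : c (v + (x + (u - v) - y)) = c v := by
    refine apply_add_sub_eq_of_notMem_fiberColors hc hπ (hd ▸ hne) ?_ ?_ <;> rw [← huv]
    exacts [hd ▸ hx, hy]
  exact huv' (by rw [← h₁, ← h₂]; abel_nf)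

theorem apply_eq_of_notMem_fiberColors_of_forall_card_le {k : ZMod m}
    (hk : ∀ i, #(fiberColors π c i) ≤ #(fiberColors π c k)) {u v : ZMod n} (huv : π u = π v)
    (hu : c u ∉ fiberColors π c k) (hv : c v ∉ fiberColors π c k) : c u = c v := by
  by_contra hne
  have hpair : {c u, c v} ⊆ fiberColors π c (π u) \ fiberColors π c k := by
    intro b hb
    rw [mem_insert, mem_singleton] at hb
    rcases hb with rfl | rfl
    · exact mem_sdiff.2 ⟨apply_mem_fiberColors u, hu⟩
    · exact mem_sdiff.2 ⟨huv ▸ apply_mem_fiberColors v, hv⟩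
  have hcard : 1 < #(fiberColors π c k \ fiberColors π c (π u)) :=
    calc 1 < #{c u, c v} := by rw [card_pair hne]; norm_num
      _ ≤ #(fiberColors π c (π u) \ fiberColors π c k) := card_le_card hpair
      _ ≤ #(fiberColors π c k \ fiberColors π c (π u)) := card_sdiff_le_card_sdiff_iff.2 (hk _)
  obtain ⟨_, hb₁, _, hb₂, hb⟩ := one_lt_card.1 hcard
  rw [mem_sdiff, mem_fiberColors] at hb₁ hb₂
  obtain ⟨⟨x, hx, rfl⟩, hx'⟩ := hb₁
  obtain ⟨⟨y, hy, rfl⟩, hy'⟩ := hb₂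
  subst hx
  exact hne (apply_eq_of_crossed_fibers hc huv hy.symm hb hu hv hx' hy')

end Fibers

section Quotient

variable (π : ZMod n →+ ZMod m) (c : ZMod n → α) (S : Finset α)

open Classical in
/-- Meant for colourings in which each fibre of `π` has at most one colour outside `S`:
a fibre is coloured by that colour, or by `none` if it has none. -/
noncomputable def quotientColoring (i : ZMod m) : Option α :=
  if h : ∃ x, π x = i ∧ c x ∉ S then some (c h.choose) else none

variable {π c S}

theorem quotientColoring_ne_none_iff {i : ZMod m} :
    quotientColoring π c S i ≠ none ↔ ∃ x, π x = i ∧ c x ∉ S := by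
  unfold quotientColoring
  split_ifs with h <;> simp [h]

variable (hS : ∀ u v, π u = π v → c u ∉ S → c v ∉ S → c u = c v)
include hS

theorem quotientColoring_apply_of_notMem {x : ZMod n} (hx : c x ∉ S) :
    quotientColoring π c S (π x) = some (c x) := by
  have h : ∃ y, π y = π x ∧ c y ∉ S := ⟨x, rfl, hx⟩
  rw [quotientColoring, dif_pos h]
  exact congrArg some (hS _ _ h.choose_spec.1 h.choose_spec.2 hx)

theorem apply_ne_of_quotientColoring_ne {x y : ZMod n} (hx : c x ∉ S)
    (h : quotientColoring π c S (π x) ≠ quotientColoring π c S (π y)) : c x ≠ c y := by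
  intro hxy
  rw [quotientColoring_apply_of_notMem hS hx, hxy,
    ← quotientColoring_apply_of_notMem hS (hxy ▸ hx)] at h
  exact h rfl

/-- Take the rainbow solution with its first three colours different from `none` and lift these
three points; the colour of the fourth point lies in its own fibre, so it misses the other three. -/
theorem HasRainbowSidon.of_quotientColoring (h : HasRainbowSidon (quotientColoring π c S)) :
    HasRainbowSidon c := by
  obtain ⟨i₁, i₂, i₃, i₄, ⟨hs, h₁₂, h₁₃, h₁₄, h₂₃, h₂₄, h₃₄⟩, h₁, h₂, h₃⟩ := h.exists_ne none
  obtain ⟨x₁, rfl, hx₁⟩ := quotientColoring_ne_none_iff.1 h₁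
  obtain ⟨x₂, rfl, hx₂⟩ := quotientColoring_ne_none_iff.1 h₂
  obtain ⟨x₃, rfl, hx₃⟩ := quotientColoring_ne_none_iff.1 h₃
  obtain rfl : i₄ = π (x₁ + x₂ - x₃) := by rw [map_sub, map_add, hs, add_sub_cancel_left]
  refine ⟨x₁, x₂, x₃, x₁ + x₂ - x₃, by abel, ?_, ?_, ?_, ?_, ?_, ?_⟩ <;>
    exact apply_ne_of_quotientColoring_ne hS ‹_› ‹_›

theorem card_sdiff_add_two_le_rbSidon [NeZero n] [DecidableEq α] (hm : 0 < m)
    (hc : ¬HasRainbowSidon c) {k : ZMod m} (hk : ∀ x, π x = k → c x ∈ S) :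
    #(univ.image c \ S) + 2 ≤ rbSidon m := by
  by_contra! hlt
  refine hc (.of_quotientColoring hS (.of_card_le hm
    (s := insert none ((univ.image c \ S).image some)) (fun o ho => ?_) ?_))
  · rw [coe_insert, Set.mem_insert_iff, coe_image, Set.mem_image] at ho
    rcases ho with rfl | ⟨_, hb, rfl⟩
    · refine ⟨k, not_not.1 fun h => ?_⟩
      obtain ⟨x, hx, hxS⟩ := quotientColoring_ne_none_iff.1 h
      exact hxS (hk x hx)
    · obtain ⟨hb, hbS⟩ := mem_sdiff.1 hb
      obtain ⟨x, -, rfl⟩ := mem_image.1 hb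
      exact ⟨π x, quotientColoring_apply_of_notMem hS hbS⟩
  · rw [card_insert_of_notMem (by simp), card_image_of_injective _ (Option.some_injective α)]
    omega

end Quotient

theorem card_image_add_three_le_of_not_hasRainbowSidon [NeZero n] [DecidableEq α] (hm : 0 < m)
    (ht : 0 < t) (π : ZMod n →+ ZMod m) (φ : ZMod t →+ ZMod n) (hφ : π.ker ≤ φ.range)
    {c : ZMod n → α} (hc : ¬HasRainbowSidon c) :
    #(univ.image c) + 3 ≤ rbSidon m + rbSidon t := by
  have : NeZero m := ⟨hm.ne'⟩
  obtain ⟨k, -, hk⟩ := exists_max_image univ (fun i => #(fiberColors π c i)) univ_nonempty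
  have hS : ∀ u v, π u = π v → c u ∉ fiberColors π c k → c v ∉ fiberColors π c k → c u = c v :=
    fun _ _ => apply_eq_of_notMem_fiberColors_of_forall_card_le hc fun i => hk i (mem_univ i)
  have hfiber := card_fiberColors_lt hc ht φ hφ k
  have hrest := card_sdiff_add_two_le_rbSidon hS hm hc (k := k)
    fun x hx => hx ▸ apply_mem_fiberColors x
  have := card_le_card_sdiff_add_card (s := univ.image c) (t := fiberColors π c k)
  omega

def scaleHom (p t : ℕ) : ZMod t →+ ZMod (p * t) :=
  ZMod.lift t ⟨zmultiplesHom _ (p : ZMod (p * t)), by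
    rw [zmultiplesHom_apply, natCast_zsmul, nsmul_eq_mul, ← Nat.cast_mul, mul_comm,
      ZMod.natCast_self]⟩

theorem ker_castHom_le_range_scaleHom (p t : ℕ) :
    (ZMod.castHom (dvd_mul_right p t) (ZMod p) : ZMod (p * t) →+ ZMod p).ker ≤
      (scaleHom p t).range := by
  intro z hz
  obtain ⟨k, rfl⟩ := ZMod.intCast_surjective z
  rw [AddMonoidHom.mem_ker, AddMonoidHom.coe_coe, map_intCast,
    ZMod.intCast_zmod_eq_zero_iff_dvd] at hz
  obtain ⟨j, rfl⟩ := hz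
  refine ⟨j, ?_⟩
  rw [scaleHom, ZMod.lift_coe, zmultiplesHom_apply, zsmul_eq_mul, mul_comm]
  push_cast
  ring

theorem rb_sidon_subadditive_general (n p t : ℕ) (hn : 0 < n) (hdvd : p ∣ n)
    (ht : t = n / p) :
    rbSidon n ≤ rbSidon p + rbSidon t - 2 := by
  obtain ⟨s, rfl⟩ := hdvd
  have hp : 0 < p := Nat.pos_of_mul_pos_right hn
  obtain rfl : t = s := by rw [ht, Nat.mul_div_cancel_left s hp]
  have ht : 0 < t := Nat.pos_of_mul_pos_left hn
  have : NeZero (p * t) := ⟨hn.ne'⟩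
  have := two_le_rbSidon hp
  have := two_le_rbSidon ht
  refine rbSidon_le (by omega) fun c hc => by_contra fun hrb => ?_
  have hcard := card_image_add_three_le_of_not_hasRainbowSidon hp ht _ _
    (ker_castHom_le_range_scaleHom p t) hrb
  rw [image_univ_of_surjective hc, card_univ, Fintype.card_fin] at hcard
  omega

theorem rb_sidon_subadditive (n p t : ℕ) (hn : 0 < n) (hp : p.Prime) (hdvd : p ∣ n)
    (ht : t = n / p) :
    rbSidon n ≤ rbSidon p + rbSidon t - 2 :=
  rb_sidon_subadditive_general n p t hn hdvd ht
end

section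
/- Let n = 3t and let c be a rainbow Sidon free coloring of Z_n. For 0 ≤ i < t let R_i = i + ⟨t⟩ denote the i-th coset of the subgroup of Z_n generated by t (so each R_i has 3 elements). If |c(R_0)| = 3 and |c(R_i) \ c(R_0)| = 1 for some i, then |c(R_i)| = 1. -/
theorem mono_coset (n t : ℕ) (ht : 0 < t) (hnt : n = 3 * t)
    {α : Type*} (c : ZMod n → α) (hfree : ¬ HasRainbowSidon c)
    (R : ℕ → Set (ZMod n))
    (hR : ∀ i, R i = {x : ZMod n | ∃ s : ZMod n, x = (i : ZMod n) + s * (t : ZMod n)})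
    (h0 : (c '' R 0).ncard = 3)
    (i : ℕ) (hi : i < t) (hdiff : (c '' R i \ c '' R 0).ncard = 1) :
    (c '' R i).ncard = 1 := by
  haveI : NeZero n := ⟨by omega⟩
  set T : ZMod n := (t : ZMod n) with hTdef
  have h3T : 3 * T = 0 := by
    have h : ((3 * t : ℕ) : ZMod n) = 0 := by rw [← hnt]; exact ZMod.natCast_self n
    push_cast at h
    exact h
  have hmul : ∀ s : ZMod n, s * T = 0 ∨ s * T = T ∨ s * T = 2 * T := by
    intro s
    obtain ⟨k, rfl⟩ : ∃ k : ℕ, (k : ZMod n) = s := ⟨s.val, ZMod.natCast_zmod_val s⟩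
    have hk : (k : ZMod n) * T = ((k % 3 : ℕ) : ZMod n) * T := by
      conv_lhs => rw [← Nat.mod_add_div k 3]
      push_cast
      linear_combination ((k / 3 : ℕ) : ZMod n) * h3T
    have hlt : k % 3 < 3 := Nat.mod_lt _ (by norm_num)
    rw [hk]
    interval_cases h : (k % 3)
    · left; simp
    · right; left; simp
    · right; right; push_cast; ring
  have hmemR : ∀ (j : ℕ) (x : ZMod n), x ∈ R j ↔ ∃ s : ZMod n, x = (j : ZMod n) + s * T := by
    intro j x; rw [hR]; rfl
  have hR0 : R 0 = {0, T, 2 * T} := by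
    ext x
    rw [hmemR]
    simp only [Nat.cast_zero, zero_add, Set.mem_insert_iff, Set.mem_singleton_iff]
    constructor
    · rintro ⟨s, rfl⟩; exact hmul s
    · rintro (rfl | rfl | rfl)
      exacts [⟨0, by ring⟩, ⟨1, by ring⟩, ⟨2, by ring⟩]
  have hcR0 : c '' R 0 = {c 0, c T, c (2 * T)} := by
    rw [hR0]
    simp [Set.image_insert_eq]
  have pair_le : ∀ a b : α, ({a, b} : Set α).ncard ≤ 2 := by
    intro a b
    have h1 := Set.ncard_insert_le a ({b} : Set α)
    simpa using h1
  have hd : c 0 ≠ c T ∧ c 0 ≠ c (2 * T) ∧ c T ≠ c (2 * T) := by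
    rw [hcR0] at h0
    refine ⟨?_, ?_, ?_⟩ <;> intro h
    · have he : ({c 0, c T, c (2 * T)} : Set α) = {c T, c (2 * T)} := by
        rw [h]; ext z; simp only [Set.mem_insert_iff, Set.mem_singleton_iff]; tauto
      rw [he] at h0
      have := pair_le (c T) (c (2 * T)); omega
    · have he : ({c 0, c T, c (2 * T)} : Set α) = {c (2 * T), c T} := by
        rw [h]; ext z; simp only [Set.mem_insert_iff, Set.mem_singleton_iff]; tauto
      rw [he] at h0
      have := pair_le (c (2 * T)) (c T); omega
    · have he : ({c 0, c T, c (2 * T)} : Set α) = {c 0, c T} := by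
        rw [h]; ext z; simp only [Set.mem_insert_iff, Set.mem_singleton_iff]; tauto
      rw [he] at h0
      have := pair_le (c 0) (c T); omega
  obtain ⟨d01, d02, d12⟩ := hd
  obtain ⟨a, ha⟩ := Set.ncard_eq_one.mp hdiff
  have hamem : a ∈ c '' R i \ c '' R 0 := by rw [ha]; exact rfl
  obtain ⟨⟨y, hyR, hya⟩, haR0⟩ := hamem
  have hmem0 : (0 : ZMod n) ∈ R 0 := by rw [hR0]; left; rfl
  have hmemT : T ∈ R 0 := by rw [hR0]; right; left; rfl
  have hmem2T : 2 * T ∈ R 0 := by rw [hR0]; right; right; rfl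
  have ha0 : a ≠ c 0 := fun h => haR0 (h ▸ ⟨0, hmem0, rfl⟩)
  have haT : a ≠ c T := fun h => haR0 (h ▸ ⟨T, hmemT, rfl⟩)
  have ha2 : a ≠ c (2 * T) := fun h => haR0 (h ▸ ⟨2 * T, hmem2T, rfl⟩)
  have key : ∀ x ∈ R i, c x = a := by
    intro x hx
    by_contra hxa
    have hximg : c x ∈ c '' R 0 := by
      by_contra h
      have hm : c x ∈ c '' R i \ c '' R 0 := ⟨⟨x, hx, rfl⟩, h⟩
      rw [ha] at hm
      exact hxa hm
    rw [hcR0] at hximg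
    simp only [Set.mem_insert_iff, Set.mem_singleton_iff] at hximg
    have hxy : x ≠ y := fun h => hxa (h ▸ hya)
    have hdic : y = x + T ∨ y = x + 2 * T := by
      rw [hmemR] at hx hyR
      obtain ⟨s1, rfl⟩ := hx
      obtain ⟨s2, rfl⟩ := hyR
      rcases hmul (s2 - s1) with h | h | h
      · exact absurd (by linear_combination -h) hxy
      · left; linear_combination h
      · right; linear_combination h
    apply hfree
    rcases hximg with h | h | h <;> rcases hdic with hy | hy
    · exact ⟨y, T, x, 2 * T, by linear_combination hy,
        by rw [hya]; exact haT, by rw [hya]; exact fun hh => hxa hh.symm,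
        by rw [hya]; exact ha2, by rw [h]; exact d01.symm, d12, by rw [h]; exact d02⟩
    · exact ⟨y, 2 * T, x, T, by linear_combination hy + h3T,
        by rw [hya]; exact ha2, by rw [hya]; exact fun hh => hxa hh.symm,
        by rw [hya]; exact haT, by rw [h]; exact d02.symm, d12.symm, by rw [h]; exact d01⟩
    · exact ⟨y, 2 * T, x, 0, by linear_combination hy + h3T,
        by rw [hya]; exact ha2, by rw [hya]; exact fun hh => hxa hh.symm,
        by rw [hya]; exact ha0, by rw [h]; exact d12.symm, d02.symm,
        by rw [h]; exact d01.symm⟩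
    · exact ⟨y, 0, x, 2 * T, by linear_combination hy,
        by rw [hya]; exact ha0, by rw [hya]; exact fun hh => hxa hh.symm,
        by rw [hya]; exact ha2, by rw [h]; exact d01, d02,
        by rw [h]; exact d12⟩
    · exact ⟨y, 0, x, T, by linear_combination hy,
        by rw [hya]; exact ha0, by rw [hya]; exact fun hh => hxa hh.symm,
        by rw [hya]; exact haT, by rw [h]; exact d02, d01,
        by rw [h]; exact d12.symm⟩
    · exact ⟨y, T, x, 0, by linear_combination hy + h3T,
        by rw [hya]; exact haT, by rw [hya]; exact fun hh => hxa hh.symm,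
        by rw [hya]; exact ha0, by rw [h]; exact d12, d01.symm,
        by rw [h]; exact d02.symm⟩
  have himg : c '' R i = {a} := by
    apply Set.eq_singleton_iff_unique_mem.mpr
    refine ⟨⟨y, hyR, hya⟩, ?_⟩
    rintro b ⟨x, hx, rfl⟩
    exact key x hx
  rw [himg, Set.ncard_singleton]
end

section
/- If 3 divides n, then rb(Z_n,S) ≥ 1 + rb(Z_n,1), where rb(Z_n,1) is the rainbow number of Z_n for the Schur equation x₁+x₂ = x₃. -/
/-- `c` admits a rainbow solution to the Schur equation `x₁ + x₂ = x₃`. -/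
def HasRainbowSchur {n : ℕ} {α : Type*} (c : ZMod n → α) : Prop :=
  ∃ x₁ x₂ x₃ : ZMod n, x₁ + x₂ = x₃ ∧ c x₁ ≠ c x₂ ∧ c x₁ ≠ c x₃ ∧ c x₂ ≠ c x₃

/-- The rainbow number `rb(ℤ_n, 1)` of `ℤ_n` for the Schur equation. -/
noncomputable def rbSchur (n : ℕ) : ℕ :=
  sInf {r : ℕ | 0 < r ∧ ∀ c : ZMod n → Fin r, Function.Surjective c → HasRainbowSchur c}

section Aux

private lemma fin_castSucc_ne_last {k : ℕ} (i : Fin k) : i.castSucc ≠ Fin.last k := by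
  intro h
  have h1 := i.is_lt
  have h2 : (i.castSucc : Fin (k+1)).val = (Fin.last k).val := by rw [h]
  simp [Fin.castSucc, Fin.last] at h2
  omega

private lemma fin_eq_castSucc {k : ℕ} (i : Fin (k+1)) (h : i ≠ Fin.last k) :
    ∃ j : Fin k, i = j.castSucc := by
  have h1 := i.is_lt
  have h2 : i.val ≠ k := fun hv => h (Fin.ext hv)
  exact ⟨⟨i.val, by omega⟩, Fin.ext rfl⟩

/-- From no rainbow Schur solutions, every Schur triple has a repeated color. -/
private lemma schur3 {n : ℕ} {α : Type*} {c : ZMod n → α} (hno : ¬ HasRainbowSchur c) :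
    ∀ u v : ZMod n, c u = c v ∨ c u = c (u + v) ∨ c v = c (u + v) := by
  intro u v
  by_contra h
  push_neg at h
  exact hno ⟨u, v, u + v, rfl, h.1, h.2.1, h.2.2⟩

/-- Key lemma: a Schur-rainbow-free coloring has no Sidon solution with four
pairwise distinct colors. -/
private lemma no4 {n : ℕ} {α : Type*} {c : ZMod n → α} (hno : ¬ HasRainbowSchur c)
    {x1 x2 x3 x4 : ZMod n} (heq : x1 + x2 = x3 + x4)
    (h12 : c x1 ≠ c x2) (h13 : c x1 ≠ c x3) (h14 : c x1 ≠ c x4)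
    (_h23 : c x2 ≠ c x3) (h24 : c x2 ≠ c x4) (h34 : c x3 ≠ c x4) : False := by
  set d := x1 - x3 with hd
  have e1 : x3 + d = x1 := by rw [hd]; ring
  have e2 : x2 + d = x4 := by rw [hd]; linear_combination heq
  have t1 := schur3 hno x3 d
  have t2 := schur3 hno x2 d
  rw [e1] at t1; rw [e2] at t2
  rcases t1 with t1 | t1 | t1
  · rcases t2 with t2 | t2 | t2
    · exact _h23 (t2.trans t1.symm)
    · exact h24 t2
    · exact h34 (t1.trans t2)
  · exact h13 t1.symm
  · rcases t2 with t2 | t2 | t2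
    · exact h12 (t2.trans t1).symm
    · exact h24 t2
    · exact h14 (t1.symm.trans t2)

private lemma step' (n : ℕ) (hn : 0 < n) (h3 : 3 ∣ n) (k : ℕ) (c : ZMod n → Fin k)
    (hc : Function.Surjective c) (hno : ¬ HasRainbowSchur c) :
    ∃ d : ZMod n → Fin (k+1), Function.Surjective d ∧ ¬ HasRainbowSidon d := by
  classical
  haveI : NeZero n := ⟨hn.ne'⟩
  by_cases hcase : ∃ y : ZMod n, y ≠ 0 ∧ c y = c 0
  · -- Case 1: the color of 0 is not unique: give 0 a fresh color.
    obtain ⟨y, hy0, hyc⟩ := hcase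
    set d1 : ZMod n → Fin (k+1) := fun x => if x = 0 then Fin.last k else (c x).castSucc
      with hd1
    have ev0 : d1 0 = Fin.last k := by rw [hd1]; simp
    have evn : ∀ x : ZMod n, x ≠ 0 → d1 x = (c x).castSucc := by
      intro x hx
      rw [hd1]
      simp only [if_neg hx]
    refine ⟨d1, ?_, ?_⟩
    · intro j
      by_cases hj : j = Fin.last k
      · exact ⟨0, by rw [ev0, hj]⟩
      · obtain ⟨i, rfl⟩ := fin_eq_castSucc j hj
        obtain ⟨v, hv⟩ := hc i
        by_cases hv0 : v = 0
        · exact ⟨y, by rw [evn y hy0, hyc, ← hv0, hv]⟩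
        · exact ⟨v, by rw [evn v hv0, hv]⟩
    · rintro ⟨x1, x2, x3, x4, heq, h12, h13, h14, h23, h24, h34⟩
      by_cases z1 : x1 = 0
      · have z2 : x2 ≠ 0 := fun h => h12 (by rw [z1, h])
        have z3 : x3 ≠ 0 := fun h => h13 (by rw [z1, h])
        have z4 : x4 ≠ 0 := fun h => h14 (by rw [z1, h])
        rw [evn _ z2] at h23 h24
        rw [evn _ z3] at h23 h34
        rw [evn _ z4] at h24 h34
        refine hno ⟨x3, x4, x2, by rw [z1] at heq; linear_combination -heq, ?_, ?_, ?_⟩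
        · exact fun h => h34 (by rw [h])
        · exact fun h => h23 (by rw [h])
        · exact fun h => h24 (by rw [h])
      · by_cases z2 : x2 = 0
        · have z3 : x3 ≠ 0 := fun h => h23 (by rw [z2, h])
          have z4 : x4 ≠ 0 := fun h => h24 (by rw [z2, h])
          rw [evn _ z1] at h13 h14
          rw [evn _ z3] at h13 h34
          rw [evn _ z4] at h14 h34
          refine hno ⟨x3, x4, x1, by rw [z2] at heq; linear_combination -heq, ?_, ?_, ?_⟩
          · exact fun h => h34 (by rw [h])
          · exact fun h => h13 (by rw [h])
          · exact fun h => h14 (by rw [h])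
        · by_cases z3 : x3 = 0
          · have z4 : x4 ≠ 0 := fun h => h34 (by rw [z3, h])
            rw [evn _ z1] at h12 h14
            rw [evn _ z2] at h12 h24
            rw [evn _ z4] at h14 h24
            refine hno ⟨x1, x2, x4, by rw [z3] at heq; linear_combination heq, ?_, ?_, ?_⟩
            · exact fun h => h12 (by rw [h])
            · exact fun h => h14 (by rw [h])
            · exact fun h => h24 (by rw [h])
          · by_cases z4 : x4 = 0
            · rw [evn _ z1] at h12 h13
              rw [evn _ z2] at h12 h23
              rw [evn _ z3] at h13 h23
              refine hno ⟨x1, x2, x3, by rw [z4] at heq; linear_combination heq, ?_, ?_, ?_⟩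
              · exact fun h => h12 (by rw [h])
              · exact fun h => h13 (by rw [h])
              · exact fun h => h23 (by rw [h])
            · rw [evn _ z1] at h12 h13 h14
              rw [evn _ z2] at h12 h23 h24
              rw [evn _ z3] at h13 h23 h34
              rw [evn _ z4] at h14 h24 h34
              exact no4 hno heq (fun h => h12 (by rw [h])) (fun h => h13 (by rw [h]))
                (fun h => h14 (by rw [h])) (fun h => h23 (by rw [h]))
                (fun h => h24 (by rw [h])) (fun h => h34 (by rw [h]))
  · -- Case 2: the color class of 0 is {0}.
    push_neg at hcase
    have hu : ∀ y : ZMod n, c y = c 0 → y = 0 := by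
      intro y hy
      by_contra h0
      exact (hcase y h0) hy
    have csymm : ∀ x : ZMod n, c (-x) = c x := by
      intro x
      by_cases hx : x = 0
      · rw [hx, neg_zero]
      · rcases schur3 hno x (-x) with h | h | h
        · exact h.symm
        · rw [add_neg_cancel] at h
          exact absurd (hu x h) hx
        · rw [add_neg_cancel] at h
          exact absurd (hu (-x) h) (by simpa using hx)
    obtain ⟨m, hm3⟩ := h3
    have hmpos : 0 < m := by omega
    haveI : NeZero m := ⟨hmpos.ne'⟩
    have hmdvd : m ∣ n := ⟨3, by omega⟩
    set π : ZMod n →+* ZMod m := ZMod.castHom hmdvd (ZMod m) with hπdef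
    have h3' : (3:ℕ) ∣ n := ⟨m, hm3⟩
    set ρ : ZMod n →+* ZMod 3 := ZMod.castHom h3' (ZMod 3) with hρdef
    have key : ∀ x : ℕ, ((3 * (x % m) : ℕ) : ZMod n) = ((3 * x : ℕ) : ZMod n) := by
      intro x
      have h := Nat.mod_add_div x m
      have h2 : 3 * (x % m) + n * (x / m) = 3 * x := by
        conv_rhs => rw [← h]
        rw [hm3]; ring
      calc ((3 * (x % m) : ℕ) : ZMod n)
          = ((3 * (x % m) + n * (x / m) : ℕ) : ZMod n) := by
            push_cast
            simp [ZMod.natCast_self]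
        _ = ((3 * x : ℕ) : ZMod n) := by rw [h2]
    have φ_add : ∀ a b : ZMod m, ((3 * (a + b).val : ℕ) : ZMod n)
        = ((3 * a.val : ℕ) : ZMod n) + ((3 * b.val : ℕ) : ZMod n) := by
      intro a b
      rw [ZMod.val_add, key]
      push_cast
      ring
    set φ : ZMod m →+ ZMod n := AddMonoidHom.mk' (fun a => ((3 * a.val : ℕ) : ZMod n)) φ_add
      with hφdef
    have φ_apply : ∀ a : ZMod m, φ a = ((3 * a.val : ℕ) : ZMod n) := fun _ => rfl
    have ρφ : ∀ a : ZMod m, ρ (φ a) = 0 := by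
      intro a
      rw [φ_apply, hρdef, map_natCast]
      exact (ZMod.natCast_eq_zero_iff _ 3).mpr ⟨a.val, rfl⟩
    have kerρ : ∀ x : ZMod n, ρ x = 0 → x ≠ 0 → ∃ a : ZMod m, a ≠ 0 ∧ φ a = x := by
      intro x hx hx0
      have hx' : ((x.val : ℕ) : ZMod 3) = 0 := by
        rw [← map_natCast ρ, ZMod.natCast_rightInverse x]
        exact hx
      rw [ZMod.natCast_eq_zero_iff] at hx'
      obtain ⟨q, hq⟩ := hx'
      have hφq : φ ((q : ZMod m)) = x := by
        rw [φ_apply, ZMod.val_natCast, key, ← hq, ZMod.natCast_rightInverse x]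
      refine ⟨(q : ZMod m), fun h0 => hx0 ?_, hφq⟩
      rw [← hφq, h0, map_zero]
    set e1 : ZMod n := ((m : ℕ) : ZMod n) with he1
    set e2 : ZMod n := ((2 * m : ℕ) : ZMod n) with he2
    have he1π : π e1 = 0 := by rw [he1, hπdef, map_natCast]; exact ZMod.natCast_self m
    have he2π : π e2 = 0 := by
      rw [he2, hπdef, map_natCast]
      push_cast
      simp [ZMod.natCast_self]
    have he10 : e1 ≠ 0 := by
      rw [he1, Ne, ZMod.natCast_eq_zero_iff]
      rintro ⟨q, hq⟩
      rcases q with _ | q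
      · omega
      · have hge : n ≤ n * (q + 1) := Nat.le_mul_of_pos_right n q.succ_pos
        omega
    have he20 : e2 ≠ 0 := by
      rw [he2, Ne, ZMod.natCast_eq_zero_iff]
      rintro ⟨q, hq⟩
      rcases q with _ | q
      · omega
      · have hge : n ≤ n * (q + 1) := Nat.le_mul_of_pos_right n q.succ_pos
        omega
    have he12 : e1 ≠ e2 := by
      intro h
      have hsum : e2 = e1 + e1 := by rw [he1, he2]; push_cast; ring
      rw [hsum] at h
      exact he10 (by linear_combination -h)
    have kerπ : ∀ x : ZMod n, π x = 0 → x = 0 ∨ x = e1 ∨ x = e2 := by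
      intro x hx
      have hx' : ((x.val : ℕ) : ZMod m) = 0 := by
        rw [← map_natCast π, ZMod.natCast_rightInverse x]
        exact hx
      rw [ZMod.natCast_eq_zero_iff] at hx'
      obtain ⟨q, hq⟩ := hx'
      have hlt := ZMod.val_lt x
      have hq3 : q < 3 := by
        by_contra hq3
        push_neg at hq3
        have h5 : 3 * m ≤ m * q := by
          calc 3 * m = m * 3 := by ring
            _ ≤ m * q := Nat.mul_le_mul_left m hq3
        have h6 : m * q < 3 * m := by rw [← hq, ← hm3]; exact hlt
        omega
      have hx'' : ((x.val : ℕ) : ZMod n) = x := ZMod.natCast_rightInverse x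
      interval_cases q
      · left
        have : x.val = 0 := by omega
        rw [← hx'', this]
        simp
      · right; left
        rw [← hx'', hq, he1]
        norm_num
      · right; right
        rw [← hx'', hq, he2]
        norm_num [mul_comm]
    set w : ZMod n := if h : ∃ v : ZMod n, c v ≠ c 0 ∧ ∀ a : ZMod m, a ≠ 0 → c (φ a) ≠ c v
      then h.choose else 0 with hwdef
    set d : ZMod n → Fin (k+1) := fun x =>
      if x = 0 then (c 0).castSucc
      else if x = e1 then Fin.last k
      else if x = e2 then (c w).castSucc
      else (c (φ (π x))).castSucc with hddef
    have eval0 : d 0 = (c 0).castSucc := by rw [hddef]; simp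
    have evale1 : d e1 = Fin.last k := by
      rw [hddef]
      simp only [if_neg he10]
      simp
    have evale2 : d e2 = (c w).castSucc := by
      rw [hddef]
      simp only [if_neg he20, if_neg (Ne.symm he12)]
      simp
    have evalx : ∀ x : ZMod n, π x ≠ 0 → d x = (c (φ (π x))).castSucc := by
      intro x hx
      have hx0 : x ≠ 0 := fun h => hx (by rw [h, map_zero])
      have hxe1 : x ≠ e1 := fun h => hx (by rw [h, he1π])
      have hxe2 : x ≠ e2 := fun h => hx (by rw [h, he2π])
      rw [hddef]
      simp only [if_neg hx0, if_neg hxe1, if_neg hxe2]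
    have hπe : ∀ a : ZMod m, π ((a.val : ℕ) : ZMod n) = a := by
      intro a
      rw [hπdef, map_natCast]
      exact ZMod.natCast_rightInverse a
    refine ⟨d, ?_, ?_⟩
    · -- surjectivity
      intro j
      by_cases hj : j = Fin.last k
      · exact ⟨e1, by rw [evale1, hj]⟩
      obtain ⟨i, rfl⟩ := fin_eq_castSucc j hj
      obtain ⟨v, hv⟩ := hc i
      by_cases hv0 : v = 0
      · exact ⟨0, by rw [eval0, ← hv0, hv]⟩
      by_cases hhit : ∃ a : ZMod m, a ≠ 0 ∧ c (φ a) = c v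
      · obtain ⟨a, ha0, hca⟩ := hhit
        refine ⟨((a.val : ℕ) : ZMod n), ?_⟩
        rw [evalx _ (by rw [hπe]; exact ha0), hπe, hca, hv]
      · push_neg at hhit
        have hex : ∃ v' : ZMod n, c v' ≠ c 0 ∧ ∀ a : ZMod m, a ≠ 0 → c (φ a) ≠ c v' :=
          ⟨v, fun h => hv0 (hu v h), fun a ha => hhit a ha⟩
        have hwspec : c w ≠ c 0 ∧ ∀ a : ZMod m, a ≠ 0 → c (φ a) ≠ c w := by
          rw [hwdef, dif_pos hex]
          exact hex.choose_spec
        have hw0 : w ≠ 0 := fun h => hwspec.1 (by rw [h])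
        have diamond : ∀ p q : ZMod n, p ≠ 0 → q ≠ 0 →
            (∀ a : ZMod m, a ≠ 0 → c (φ a) ≠ c p) →
            (∀ a : ZMod m, a ≠ 0 → c (φ a) ≠ c q) →
            ρ p + ρ q = 0 → c p = c q := by
          intro p q hp0 hq0 hmp hmq hpq
          by_cases hu0 : p + q = 0
          · have hq' : q = -p := by linear_combination hu0
            rw [hq', csymm]
          · have hρu : ρ (p + q) = 0 := by rw [map_add]; exact hpq
            obtain ⟨a, ha0, hfa⟩ := kerρ _ hρu hu0
            rcases schur3 hno p q with h | h | h
            · exact h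
            · exact absurd h.symm (by rw [← hfa] at *; exact hmp a ha0)
            · exact absurd h.symm (by rw [← hfa] at *; exact hmq a ha0)
        have hρv : ρ v ≠ 0 := by
          intro h0
          obtain ⟨a, ha0, hfa⟩ := kerρ v h0 hv0
          exact hhit a ha0 (by rw [hfa])
        have hρw : ρ w ≠ 0 := by
          intro h0
          obtain ⟨a, ha0, hfa⟩ := kerρ w h0 hw0
          exact hwspec.2 a ha0 (by rw [hfa])
        have hz3 : ∀ p q : ZMod 3, p ≠ 0 → q ≠ 0 → p + q = 0 ∨ p = q := by decide
        have hcvw : c v = c w := by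
          rcases hz3 _ _ hρv hρw with h | h
          · exact diamond v w hv0 hw0 (fun a ha => hhit a ha) hwspec.2 h
          · have hnw : (-w : ZMod n) ≠ 0 := by simpa using hw0
            have h' : ρ v + ρ (-w) = 0 := by rw [map_neg, h]; ring
            have hmw : ∀ a : ZMod m, a ≠ 0 → c (φ a) ≠ c (-w) := by
              intro a ha
              rw [csymm]
              exact hwspec.2 a ha
            have hvw := diamond v (-w) hv0 hnw (fun a ha => hhit a ha) hmw h'
            rw [csymm] at hvw
            exact hvw
        exact ⟨e2, by rw [evale2, ← hcvw, hv]⟩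
    · -- no rainbow Sidon
      rintro ⟨x1, x2, x3, x4, heq, h12, h13, h14, h23, h24, h34⟩
      have ha : π x1 + π x2 = π x3 + π x4 := by rw [← map_add, ← map_add, heq]
      have hcol : ∀ {xi xj : ZMod n}, π xi ≠ 0 → π xj ≠ 0 → d xi ≠ d xj →
          c (φ (π xi)) ≠ c (φ (π xj)) := by
        intro xi xj hi hj hij h
        exact hij (by rw [evalx _ hi, evalx _ hj, h])
      have hsame : ∀ {xi xj : ZMod n}, π xi ≠ 0 → π xj ≠ 0 → π xi = π xj → d xi = d xj := by
        intro xi xj hi hj hij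
        rw [evalx _ hi, evalx _ hj, hij]
      by_cases z1 : π x1 = 0 <;> by_cases z2 : π x2 = 0 <;>
        by_cases z3 : π x3 = 0 <;> by_cases z4 : π x4 = 0
      -- TTTT
      · rcases kerπ x1 z1 with rfl | rfl | rfl <;> rcases kerπ x2 z2 with rfl | rfl | rfl <;>
          rcases kerπ x3 z3 with rfl | rfl | rfl <;> rcases kerπ x4 z4 with rfl | rfl | rfl <;>
          first
            | exact h12 rfl | exact h13 rfl | exact h14 rfl
            | exact h23 rfl | exact h24 rfl | exact h34 rfl
      -- TTTF
      · rw [z1, z2, z3] at ha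
        exact z4 (by linear_combination -ha)
      -- TTFT
      · rw [z1, z2, z4] at ha
        exact z3 (by linear_combination -ha)
      -- TTFF
      · rw [z1, z2] at ha
        have h0 : π x4 = -π x3 := by linear_combination -ha
        have : φ (π x4) = - φ (π x3) := by rw [h0, map_neg]
        exact h34 (by rw [evalx _ z3, evalx _ z4, this, csymm])
      -- TFTT
      · rw [z1, z3, z4] at ha
        exact z2 (by linear_combination ha)
      -- TFTF
      · rw [z1, z3] at ha
        exact h24 (hsame z2 z4 (by linear_combination ha))
      -- TFFT
      · rw [z1, z4] at ha
        exact h23 (hsame z2 z3 (by linear_combination ha))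
      -- TFFF
      · rw [z1] at ha
        refine hno ⟨φ (π x3), φ (π x4), φ (π x2),
          (by rw [← map_add]; congr 1; linear_combination -ha), ?_, ?_, ?_⟩
        · exact hcol z3 z4 h34
        · exact (hcol z2 z3 h23).symm
        · exact (hcol z2 z4 h24).symm
      -- FTTT
      · rw [z2, z3, z4] at ha
        exact z1 (by linear_combination ha)
      -- FTTF
      · rw [z2, z3] at ha
        exact h14 (hsame z1 z4 (by linear_combination ha))
      -- FTFT
      · rw [z2, z4] at ha
        exact h13 (hsame z1 z3 (by linear_combination ha))
      -- FTFF
      · rw [z2] at ha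
        refine hno ⟨φ (π x3), φ (π x4), φ (π x1),
          (by rw [← map_add]; congr 1; linear_combination -ha), ?_, ?_, ?_⟩
        · exact hcol z3 z4 h34
        · exact (hcol z1 z3 h13).symm
        · exact (hcol z1 z4 h14).symm
      -- FFTT
      · rw [z3, z4] at ha
        have h0 : π x2 = -π x1 := by linear_combination ha
        have : φ (π x2) = - φ (π x1) := by rw [h0, map_neg]
        exact h12 (by rw [evalx _ z1, evalx _ z2, this, csymm])
      -- FFTF
      · rw [z3] at ha
        refine hno ⟨φ (π x1), φ (π x2), φ (π x4),
          (by rw [← map_add]; congr 1; linear_combination ha), ?_, ?_, ?_⟩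
        · exact hcol z1 z2 h12
        · exact hcol z1 z4 h14
        · exact hcol z2 z4 h24
      -- FFFT
      · rw [z4] at ha
        refine hno ⟨φ (π x1), φ (π x2), φ (π x3),
          (by rw [← map_add]; congr 1; linear_combination ha), ?_, ?_, ?_⟩
        · exact hcol z1 z2 h12
        · exact hcol z1 z3 h13
        · exact hcol z2 z3 h23
      -- FFFF
      · set δ : ZMod m := π x1 - π x3 with hδ
        have hsum1 : φ (π x3) + φ δ = φ (π x1) := by
          rw [← map_add]
          congr 1
          rw [hδ]; ring
        have hsum2 : φ (π x2) + φ δ = φ (π x4) := by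
          rw [← map_add]
          congr 1
          rw [hδ]; linear_combination ha
        have t1 := schur3 hno (φ (π x3)) (φ δ)
        have t2 := schur3 hno (φ (π x2)) (φ δ)
        rw [hsum1] at t1
        rw [hsum2] at t2
        rcases t1 with t1 | t1 | t1
        · rcases t2 with t2 | t2 | t2
          · exact (hcol z2 z3 h23) (t2.trans t1.symm)
          · exact (hcol z2 z4 h24) t2
          · exact (hcol z3 z4 h34) (t1.trans t2)
        · exact (hcol z1 z3 h13) t1.symm
        · rcases t2 with t2 | t2 | t2
          · exact (hcol z1 z2 h12) (t2.trans t1).symm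
          · exact (hcol z2 z4 h24) t2
          · exact (hcol z1 z4 h14) (t1.symm.trans t2)

end Aux

theorem rb_sidon_ge_schur_succ (n : ℕ) (hn : 0 < n) (h3 : 3 ∣ n) :
    1 + rbSchur n ≤ rbSidon n := by
  classical
  haveI : NeZero n := ⟨hn.ne'⟩
  have hAne : (n + 1) ∈ {r : ℕ | 0 < r ∧
      ∀ c : ZMod n → Fin r, Function.Surjective c → HasRainbowSidon c} := by
    refine ⟨by omega, ?_⟩
    intro c hcsurj
    have hcard := Fintype.card_le_of_surjective c hcsurj
    rw [ZMod.card, Fintype.card_fin] at hcard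
    omega
  have hR : rbSidon n ∈ {r : ℕ | 0 < r ∧
      ∀ c : ZMod n → Fin r, Function.Surjective c → HasRainbowSidon c} := by
    unfold rbSidon
    exact Nat.sInf_mem ⟨n + 1, hAne⟩
  set R := rbSidon n with hRdef
  have hR2 : 2 ≤ R := by
    by_contra h
    push_neg at h
    have hR1 : R = 1 := by have := hR.1; omega
    have hsurj : Function.Surjective (fun _ : ZMod n => (⟨0, by omega⟩ : Fin R)) := by
      intro j
      refine ⟨0, ?_⟩
      have := j.is_lt
      exact Fin.ext (by omega)
    obtain ⟨x1, x2, x3, x4, heq, h12, _⟩ := hR.2 _ hsurj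
    exact h12 rfl
  have hstep : (R - 1) ∈ {r : ℕ | 0 < r ∧
      ∀ c : ZMod n → Fin r, Function.Surjective c → HasRainbowSchur c} := by
    refine ⟨by omega, ?_⟩
    intro c hcsurj
    by_contra hno
    obtain ⟨d, hsurj, hnosid⟩ := step' n hn h3 (R - 1) c hcsurj hno
    have hcast : R - 1 + 1 = R := by omega
    have hsurj' : Function.Surjective (fun x => Fin.cast hcast (d x)) := by
      intro j
      obtain ⟨x, hx⟩ := hsurj (Fin.cast hcast.symm j)
      refine ⟨x, ?_⟩
      show Fin.cast hcast (d x) = j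
      rw [hx]
      exact Fin.ext rfl
    obtain ⟨x1, x2, x3, x4, heq, h12, h13, h14, h23, h24, h34⟩ := hR.2 _ hsurj'
    simp only at h12 h13 h14 h23 h24 h34
    refine hnosid ⟨x1, x2, x3, x4, heq, ?_, ?_, ?_, ?_, ?_, ?_⟩
    · exact fun h => h12 (congrArg (Fin.cast hcast) h)
    · exact fun h => h13 (congrArg (Fin.cast hcast) h)
    · exact fun h => h14 (congrArg (Fin.cast hcast) h)
    · exact fun h => h23 (congrArg (Fin.cast hcast) h)
    · exact fun h => h24 (congrArg (Fin.cast hcast) h)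
    · exact fun h => h34 (congrArg (Fin.cast hcast) h)
  have hle : rbSchur n ≤ R - 1 := by
    unfold rbSchur
    exact Nat.sInf_le hstep
  omega
end

section
/- Let 9 divide n and let t = n/3. Then rb(Z_n,S) ≤ rb(Z_3,S) + rb(Z_t,S) − 3; equivalently, since rb(Z_3,S) = 4, rb(Z_n,S) ≤ rb(Z_t,S) + 1. -/
open Finset Function

private lemma four_le_of_pd {r : ℕ} (a b c d : Fin r) (h1 : a ≠ b) (h2 : a ≠ c)
    (h3 : a ≠ d) (h4 : b ≠ c) (h5 : b ≠ d) (h6 : c ≠ d) : 4 ≤ r := by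
  have hc : ({a, b, c, d} : Finset (Fin r)).card = 4 := by
    rw [Finset.card_insert_of_notMem (by simp [h1, h2, h3]),
      Finset.card_insert_of_notMem (by simp [h4, h5]),
      Finset.card_insert_of_notMem (by simp [h6]), Finset.card_singleton]
  calc 4 = _ := hc.symm
    _ ≤ (univ : Finset (Fin r)).card := Finset.card_le_univ _
    _ = r := by simp

private lemma rbSidon_three : rbSidon 3 = 4 := by
  have h4 : 4 ∈ {r : ℕ | 0 < r ∧ ∀ c : ZMod 3 → Fin r, Function.Surjective c → HasRainbowSidon c} := by
    refine ⟨by norm_num, fun c hc => ?_⟩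
    exfalso
    have := Fintype.card_le_of_surjective c hc
    simp [ZMod.card] at this
  refine le_antisymm (Nat.sInf_le h4) (le_csInf ⟨4, h4⟩ ?_)
  rintro b ⟨hb0, hball⟩
  by_contra hlt
  push_neg at hlt
  have hb3 : b ≤ 3 := by omega
  set cb : ZMod 3 → Fin b := fun x => ⟨min x.val (b - 1), by omega⟩ with hcb
  have hsurj : Function.Surjective cb := by
    intro i
    refine ⟨((i : ℕ) : ZMod 3), ?_⟩
    have hv : (((i : ℕ) : ZMod 3)).val = (i : ℕ) := ZMod.val_cast_of_lt (by omega)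
    apply Fin.ext
    show min (((i : ℕ) : ZMod 3)).val (b - 1) = (i : ℕ)
    rw [hv]
    have : (i : ℕ) ≤ b - 1 := by omega
    omega
  obtain ⟨x₁, x₂, x₃, x₄, -, p1, p2, p3, p4, p5, p6⟩ := hball cb hsurj
  have := four_le_of_pd _ _ _ _ p1 p2 p3 p4 p5 p6
  omega

set_option maxHeartbeats 2000000 in
private lemma key (t : ℕ) (h3t : 3 ∣ t) (ht : 3 ≤ t)
    (c : ZMod (3*t) → Fin (rbSidon t + 1)) (hs : Function.Surjective c) :
    HasRainbowSidon c := by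
  by_contra hno
  classical
  haveI : NeZero t := ⟨by omega⟩
  haveI : NeZero (3*t) := ⟨by omega⟩
  have hRmem : 0 < rbSidon t ∧ ∀ d : ZMod t → Fin (rbSidon t), Function.Surjective d → HasRainbowSidon d := by
    have hne : {r : ℕ | 0 < r ∧ ∀ d : ZMod t → Fin r, Function.Surjective d → HasRainbowSidon d}.Nonempty := by
      refine ⟨t + 1, by omega, fun d hd => ?_⟩
      exfalso
      have := Fintype.card_le_of_surjective d hd
      simp [ZMod.card] at this
    exact Nat.sInf_mem hne
  obtain ⟨hRpos, hRforce⟩ := hRmem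
  -- KT: a coloring of ZMod t with ≥ R colors has a rainbow
  have KT : ∀ c' : ZMod t → Fin (rbSidon t + 1), rbSidon t ≤ (image c' univ).card → HasRainbowSidon c' := by
    intro c' hcard
    obtain ⟨Sf, hSsub, hScard⟩ := Finset.exists_subset_card_eq hcard
    have e : {x // x ∈ Sf} ≃ Fin (rbSidon t) := Sf.equivFin.trans (finCongr hScard)
    set f : Fin (rbSidon t + 1) → Fin (rbSidon t) := fun a => if h : a ∈ Sf then e ⟨a, h⟩ else ⟨0, hRpos⟩ with hf
    have hsurj : Function.Surjective (f ∘ c') := by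
      intro i
      have hmem : ((e.symm i : {x // x ∈ Sf}) : Fin (rbSidon t + 1)) ∈ Sf := (e.symm i).2
      have hmem2 := hSsub hmem
      rw [Finset.mem_image] at hmem2
      obtain ⟨x, -, hx⟩ := hmem2
      refine ⟨x, ?_⟩
      show f (c' x) = i
      rw [hx, hf]
      simp only [dif_pos hmem]
      have h2 : (⟨((e.symm i : {x // x ∈ Sf}) : Fin (rbSidon t + 1)), hmem⟩ : {x // x ∈ Sf}) = e.symm i := by
        apply Subtype.ext; rfl
      rw [h2, Equiv.apply_symm_apply]
    obtain ⟨x₁, x₂, x₃, x₄, heq, h12, h13, h14, h23, h24, h34⟩ := hRforce (f ∘ c') hsurj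
    exact ⟨x₁, x₂, x₃, x₄, heq, fun h => h12 (congrArg f h), fun h => h13 (congrArg f h),
      fun h => h14 (congrArg f h), fun h => h23 (congrArg f h), fun h => h24 (congrArg f h),
      fun h => h34 (congrArg f h)⟩
  -- basic ZMod machinery
  set π := ZMod.castHom (dvd_mul_left t 3) (ZMod t) with hπdef
  set T : ZMod (3*t) := ((t : ℕ) : ZMod (3*t)) with hTdef
  set s : ZMod t → ZMod (3*t) := fun z => ((z.val : ℕ) : ZMod (3*t)) with hsdef
  have hπs : ∀ z, π (s z) = z := by
    intro z
    show π ((z.val : ℕ) : ZMod (3*t)) = z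
    rw [map_natCast]
    exact ZMod.natCast_rightInverse z
  have hπT : π T = 0 := by
    rw [hTdef, map_natCast]
    exact_mod_cast ZMod.natCast_self t
  have hT3 : T + T + T = 0 := by
    have h0 : ((3*t : ℕ) : ZMod (3*t)) = 0 := ZMod.natCast_self _
    rw [hTdef]
    push_cast at h0 ⊢
    linear_combination h0
  have hTne : T ≠ 0 := by
    rw [hTdef]
    intro h
    rw [ZMod.natCast_eq_zero_iff] at h
    exact absurd (Nat.le_of_dvd (by omega) h) (by omega)
  have hT2ne : T + T ≠ 0 := by
    have : T + T = ((2*t : ℕ) : ZMod (3*t)) := by rw [hTdef]; push_cast; ring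
    rw [this]
    intro h
    rw [ZMod.natCast_eq_zero_iff] at h
    exact absurd (Nat.le_of_dvd (by omega) h) (by omega)
  have hK : ∀ d : ZMod (3*t), π d = 0 → d = 0 ∨ d = T ∨ d = T + T := by
    intro d hd
    have hval : d = ((d.val : ℕ) : ZMod (3*t)) := (ZMod.natCast_rightInverse d).symm
    rw [hval, map_natCast, ZMod.natCast_eq_zero_iff] at hd
    obtain ⟨k, hk⟩ := hd
    have hlt : d.val < 3*t := ZMod.val_lt d
    have hk3 : k < 3 := by nlinarith
    interval_cases k
    · left; rw [hval]; simp [hk]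
    · right; left; rw [hval, hk, hTdef]; push_cast; ring
    · right; right; rw [hval, hk, hTdef]; push_cast; ring
  have hKm : ∀ x y : ZMod (3*t), π y = π x → y = x ∨ y = x + T ∨ y = x + T + T := by
    intro x y hxy
    have : π (y - x) = 0 := by rw [map_sub, hxy, sub_self]
    rcases hK _ this with h | h | h
    · left; linear_combination h
    · right; left; linear_combination h
    · right; right; linear_combination h
  -- no-rainbow consequences
  have NR : ∀ x₁ x₂ x₃ x₄ : ZMod (3*t), x₁ + x₂ = x₃ + x₄ →
      ¬(c x₁ ≠ c x₂ ∧ c x₁ ≠ c x₃ ∧ c x₁ ≠ c x₄ ∧ c x₂ ≠ c x₃ ∧ c x₂ ≠ c x₄ ∧ c x₃ ≠ c x₄) :=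
    fun x₁ x₂ x₃ x₄ heq hpd => hno ⟨x₁, x₂, x₃, x₄, heq, hpd.1, hpd.2.1, hpd.2.2.1,
      hpd.2.2.2.1, hpd.2.2.2.2.1, hpd.2.2.2.2.2⟩
  have NR3 : ∀ x₁ x₂ x₃ : ZMod (3*t), c x₁ ≠ c x₂ → c x₁ ≠ c x₃ → c x₂ ≠ c x₃ →
      (c (x₁ + x₂ - x₃) = c x₁ ∨ c (x₁ + x₂ - x₃) = c x₂ ∨ c (x₁ + x₂ - x₃) = c x₃) := by
    intro x₁ x₂ x₃ h1 h2 h3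
    by_contra hcon
    push_neg at hcon
    exact NR x₁ x₂ x₃ (x₁ + x₂ - x₃) (by ring)
      ⟨h1, h2, Ne.symm hcon.1, h3, Ne.symm hcon.2.1, Ne.symm hcon.2.2⟩
  have YT : ∀ (x₁ x₂ x₃ : ZMod (3*t)) (z : ZMod t), π x₁ + π x₂ = π x₃ + z →
      c x₁ ≠ c x₂ → c x₁ ≠ c x₃ → c x₂ ≠ c x₃ →
      ∃ y, π y = z ∧ (c y = c x₁ ∨ c y = c x₂ ∨ c y = c x₃) := by
    intro x₁ x₂ x₃ z hz h1 h2 h3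
    refine ⟨x₁ + x₂ - x₃, ?_, NR3 x₁ x₂ x₃ h1 h2 h3⟩
    rw [map_sub, map_add, hz]
    ring
  have FLEXS : ∀ a b x₃ x₄ : ZMod (3*t), c (a+T) = c a → c (b+T) = c b →
      π a + π b = π x₃ + π x₄ →
      c a ≠ c b → c a ≠ c x₃ → c a ≠ c x₄ → c b ≠ c x₃ → c b ≠ c x₄ → c x₃ ≠ c x₄ → False := by
    intro a b x₃ x₄ ha hb heq' d1 d2 d3 d4 d5 d6
    have hk : π ((x₃ + x₄) - (a + b)) = 0 := by
      rw [map_sub, map_add, map_add, ← heq']; ring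
    rcases hK _ hk with h | h | h
    · exact NR a b x₃ x₄ (by linear_combination -h) ⟨d1, d2, d3, d4, d5, d6⟩
    · exact NR (a+T) b x₃ x₄ (by linear_combination -h)
        ⟨by rw [ha]; exact d1, by rw [ha]; exact d2, by rw [ha]; exact d3, d4, d5, d6⟩
    · exact NR (a+T) (b+T) x₃ x₄ (by linear_combination -h)
        ⟨by rw [ha, hb]; exact d1, by rw [ha]; exact d2, by rw [ha]; exact d3,
         by rw [hb]; exact d4, by rw [hb]; exact d5, d6⟩
  have FLEXO : ∀ a x₂ b x₄ : ZMod (3*t), c (a+T) = c a → c (b+T) = c b →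
      π a + π x₂ = π b + π x₄ →
      c a ≠ c x₂ → c a ≠ c b → c a ≠ c x₄ → c x₂ ≠ c b → c x₂ ≠ c x₄ → c b ≠ c x₄ → False := by
    intro a x₂ b x₄ ha hb heq' d1 d2 d3 d4 d5 d6
    have hk : π ((b + x₄) - (a + x₂)) = 0 := by
      rw [map_sub, map_add, map_add, ← heq']; ring
    rcases hK _ hk with h | h | h
    · exact NR a x₂ b x₄ (by linear_combination -h) ⟨d1, d2, d3, d4, d5, d6⟩
    · exact NR (a+T) x₂ b x₄ (by linear_combination -h)
        ⟨by rw [ha]; exact d1, by rw [ha]; exact d2, by rw [ha]; exact d3, d4, d5, d6⟩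
    · exact NR a x₂ (b+T) x₄ (by linear_combination -h - hT3)
        ⟨d1, by rw [hb]; exact d2, d3, by rw [hb]; exact d4, d5, by rw [hb]; exact d6⟩
  -- counting helpers
  have CNT1 : ∀ c' : ZMod t → Fin (rbSidon t + 1),
      (∀ a b : Fin (rbSidon t + 1), (∀ z, c' z ≠ a) → (∀ z, c' z ≠ b) → a = b) →
      rbSidon t ≤ (image c' univ).card := by
    intro c' hone
    have hsub : image c' univ ⊆ univ := Finset.subset_univ _
    have hcard := Finset.card_sdiff_add_card_eq_card hsub
    have huniv : (univ : Finset (Fin (rbSidon t + 1))).card = rbSidon t + 1 := by simp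
    have hle1 : (univ \ image c' univ).card ≤ 1 := by
      rw [Finset.card_le_one]
      intro a ha b hb
      rw [Finset.mem_sdiff] at ha hb
      have ha' : ∀ z, c' z ≠ a := by
        intro z hz
        exact ha.2 (Finset.mem_image.2 ⟨z, Finset.mem_univ z, hz⟩)
      have hb' : ∀ z, c' z ≠ b := by
        intro z hz
        exact hb.2 (Finset.mem_image.2 ⟨z, Finset.mem_univ z, hz⟩)
      exact hone a b ha' hb'
    omega
  have CNT2 : ∀ (c' : ZMod t → Fin (rbSidon t + 1)) (α' β' γ' a₁ a₂ : Fin (rbSidon t + 1)),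
      α' ≠ β' → α' ≠ γ' → β' ≠ γ' →
      (a₁ = α' ∨ a₁ = β' ∨ a₁ = γ') → (a₂ = α' ∨ a₂ = β' ∨ a₂ = γ') → a₁ ≠ a₂ →
      (∃ z, c' z = a₁) → (∃ z, c' z = a₂) →
      (∀ a, a ≠ α' → a ≠ β' → a ≠ γ' → ∃ z, c' z = a) →
      rbSidon t ≤ (image c' univ).card := by
    intro c' α' β' γ' a₁ a₂ hab hag hbg m1 m2 h12 e1 e2 eall
    have hsub : insert a₁ (insert a₂ ((univ : Finset (Fin (rbSidon t + 1))) \ {α', β', γ'})) ⊆ image c' univ := by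
      intro a ha
      simp only [Finset.mem_insert, Finset.mem_sdiff, Finset.mem_univ, true_and,
        Finset.mem_singleton] at ha
      rw [Finset.mem_image]
      rcases ha with rfl | rfl | ha
      · obtain ⟨z, hz⟩ := e1; exact ⟨z, Finset.mem_univ z, hz⟩
      · obtain ⟨z, hz⟩ := e2; exact ⟨z, Finset.mem_univ z, hz⟩
      · have ha' : a ≠ α' ∧ a ≠ β' ∧ a ≠ γ' := by
          constructor
          · intro h; exact ha (by simp [h])
          constructor
          · intro h; exact ha (by simp [h])
          · intro h; exact ha (by simp [h])
        obtain ⟨z, hz⟩ := eall a ha'.1 ha'.2.1 ha'.2.2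
        exact ⟨z, Finset.mem_univ z, hz⟩
    have hc3 : ({α', β', γ'} : Finset (Fin (rbSidon t + 1))).card = 3 := by
      rw [Finset.card_insert_of_notMem (by simp [hab, hag]),
        Finset.card_insert_of_notMem (by simp [hbg]), Finset.card_singleton]
    have hcs : ((univ : Finset (Fin (rbSidon t + 1))) \ {α', β', γ'}).card = (rbSidon t + 1) - 3 := by
      rw [Finset.card_sdiff_of_subset (Finset.subset_univ _), hc3]
      simp
    have hm2 : a₂ ∉ (univ : Finset (Fin (rbSidon t + 1))) \ {α', β', γ'} := by
      simp only [Finset.mem_sdiff, Finset.mem_univ, true_and, not_not]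
      simp only [Finset.mem_insert, Finset.mem_singleton]
      tauto
    have hm1 : a₁ ∉ insert a₂ ((univ : Finset (Fin (rbSidon t + 1))) \ {α', β', γ'}) := by
      simp only [Finset.mem_insert]
      push_neg
      refine ⟨h12, ?_⟩
      simp only [Finset.mem_sdiff, Finset.mem_univ, true_and, not_not]
      simp only [Finset.mem_insert, Finset.mem_singleton]
      tauto
    have hcard : (insert a₁ (insert a₂ ((univ : Finset (Fin (rbSidon t + 1))) \ {α', β', γ'}))).card
        = (rbSidon t + 1) - 3 + 2 := by
      rw [Finset.card_insert_of_notMem hm1, Finset.card_insert_of_notMem hm2, hcs]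
    have h3le : 3 ≤ rbSidon t + 1 := by
      have := hc3 ▸ Finset.card_le_univ ({α', β', γ'} : Finset (Fin (rbSidon t + 1)))
      simpa using this
    have := Finset.card_le_card hsub
    omega
  -- main case split: does a 3-colored K-coset exist?
  by_cases hB : ∃ z : ZMod t, c (s z) ≠ c (s z + T) ∧ c (s z) ≠ c (s z + T + T) ∧
      c (s z + T) ≠ c (s z + T + T)
  · -- CASE II
    obtain ⟨zs, hab, had, hbd⟩ := hB
    set w := s zs with hwdef
    have hπw : π w = zs := hπs zs
    have hπwT : π (w+T) = zs := by rw [map_add, hπw, hπT, add_zero]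
    have hπwTT : π (w+T+T) = zs := by rw [map_add, hπwT, hπT, add_zero]
    have stepII : ∀ u : ZMod (3*t), c u ≠ c w → c u ≠ c (w+T) → c u ≠ c (w+T+T) →
        c (u + T) = c u := by
      intro u h1 h2 h3
      have m1 : c ((w+T) + u - w) = c (w+T) ∨ c ((w+T) + u - w) = c u ∨ c ((w+T) + u - w) = c w :=
        NR3 (w+T) u w (Ne.symm h2) hab.symm h1
      have e1 : (w+T) + u - w = u + T := by ring
      rw [e1] at m1
      have m2 : c ((w+T+T) + u - (w+T)) = c (w+T+T) ∨ c ((w+T+T) + u - (w+T)) = c u ∨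
          c ((w+T+T) + u - (w+T)) = c (w+T) :=
        NR3 (w+T+T) u (w+T) (Ne.symm h3) hbd.symm h2
      have e2 : (w+T+T) + u - (w+T) = u + T := by ring
      rw [e2] at m2
      have m3 : c (w + u - (w+T+T)) = c w ∨ c (w + u - (w+T+T)) = c u ∨
          c (w + u - (w+T+T)) = c (w+T+T) :=
        NR3 w u (w+T+T) (Ne.symm h1) had h3
      have e3 : w + u - (w+T+T) = u + T := by linear_combination -hT3
      rw [e3] at m3
      rcases m1 with h | h | h
      · rcases m3 with h' | h' | h'
        · exact absurd (h'.symm.trans h) hab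
        · exact h'
        · exact absurd (h.symm.trans h') hbd
      · exact h
      · rcases m2 with h' | h' | h'
        · exact absurd (h.symm.trans h') had
        · exact h'
        · exact absurd (h.symm.trans h') hab
    have stepII2 : ∀ u : ZMod (3*t), c u ≠ c w → c u ≠ c (w+T) → c u ≠ c (w+T+T) →
        c (u + T + T) = c u := by
      intro u h1 h2 h3
      have e1 := stepII u h1 h2 h3
      have e2 := stepII (u+T) (by rw [e1]; exact h1) (by rw [e1]; exact h2) (by rw [e1]; exact h3)
      rw [e2, e1]
    have monoOf : ∀ u : ZMod (3*t), c u ≠ c w → c u ≠ c (w+T) → c u ≠ c (w+T+T) →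
        ∀ x y : ZMod (3*t), π x = π u → π y = π u → c x = c y := by
      intro u h1 h2 h3 x y hx hy
      have hcc : ∀ v : ZMod (3*t), π v = π u → c v = c u := by
        intro v hv
        rcases hKm u v hv with rfl | rfl | rfl
        · rfl
        · exact stepII u h1 h2 h3
        · exact stepII2 u h1 h2 h3
      rw [hcc x hx, hcc y hy]
    have nmcol : ∀ z : ZMod t, ¬(∀ x y : ZMod (3*t), π x = z → π y = z → c x = c y) →
        ∀ x, π x = z → (c x = c w ∨ c x = c (w+T) ∨ c x = c (w+T+T)) := by
      intro z hnm x hx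
      by_contra hcon
      push_neg at hcon
      subst hx
      exact hnm (monoOf x hcon.1 hcon.2.1 hcon.2.2)
    have IIB : ∀ ℓ : ZMod t → ZMod (3*t), (∀ z, π (ℓ z) = z) →
        ¬ HasRainbowSidon (fun z => c (ℓ z)) := by
      intro ℓ hπℓ hrb
      obtain ⟨q₁, q₂, q₃, q₄, heq, h12, h13, h14, h23, h24, h34⟩ := hrb
      simp only at h12 h13 h14 h23 h24 h34
      by_cases m4 : ∀ x y : ZMod (3*t), π x = q₄ → π y = q₄ → c x = c y
      · obtain ⟨y, hy, hmem⟩ := YT (ℓ q₁) (ℓ q₂) (ℓ q₃) q₄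
          (by rw [hπℓ, hπℓ, hπℓ]; exact heq) h12 h13 h23
        have h4 : c y = c (ℓ q₄) := m4 y (ℓ q₄) hy (hπℓ q₄)
        rcases hmem with h | h | h
        · exact h14 (h.symm.trans h4)
        · exact h24 (h.symm.trans h4)
        · exact h34 (h.symm.trans h4)
      by_cases m3 : ∀ x y : ZMod (3*t), π x = q₃ → π y = q₃ → c x = c y
      · obtain ⟨y, hy, hmem⟩ := YT (ℓ q₁) (ℓ q₂) (ℓ q₄) q₃
          (by rw [hπℓ, hπℓ, hπℓ]; linear_combination heq) h12 h14 h24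
        have h3 : c y = c (ℓ q₃) := m3 y (ℓ q₃) hy (hπℓ q₃)
        rcases hmem with h | h | h
        · exact h13 (h.symm.trans h3)
        · exact h23 (h.symm.trans h3)
        · exact h34 (h3.symm.trans h)
      by_cases m2 : ∀ x y : ZMod (3*t), π x = q₂ → π y = q₂ → c x = c y
      · obtain ⟨y, hy, hmem⟩ := YT (ℓ q₃) (ℓ q₄) (ℓ q₁) q₂
          (by rw [hπℓ, hπℓ, hπℓ]; linear_combination -heq) h34 (Ne.symm h13) (Ne.symm h14)
        have h2 : c y = c (ℓ q₂) := m2 y (ℓ q₂) hy (hπℓ q₂)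
        rcases hmem with h | h | h
        · exact h23 (h2.symm.trans h)
        · exact h24 (h2.symm.trans h)
        · exact h12 (h.symm.trans h2)
      by_cases m1 : ∀ x y : ZMod (3*t), π x = q₁ → π y = q₁ → c x = c y
      · obtain ⟨y, hy, hmem⟩ := YT (ℓ q₃) (ℓ q₄) (ℓ q₂) q₁
          (by rw [hπℓ, hπℓ, hπℓ]; linear_combination -heq) h34 (Ne.symm h23) (Ne.symm h24)
        have h1 : c y = c (ℓ q₁) := m1 y (ℓ q₁) hy (hπℓ q₁)
        rcases hmem with h | h | h
        · exact h13 (h1.symm.trans h)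
        · exact h14 (h1.symm.trans h)
        · exact h12 (h1.symm.trans h)
      have e1 := nmcol q₁ m1 (ℓ q₁) (hπℓ q₁)
      have e2 := nmcol q₂ m2 (ℓ q₂) (hπℓ q₂)
      have e3 := nmcol q₃ m3 (ℓ q₃) (hπℓ q₃)
      have e4 := nmcol q₄ m4 (ℓ q₄) (hπℓ q₄)
      clear m1 m2 m3 m4 heq
      rcases e1 with h1 | h1 | h1 <;> rcases e2 with h2 | h2 | h2 <;>
        rcases e3 with h3 | h3 | h3 <;> rcases e4 with h4 | h4 | h4 <;>
        first
        | exact h12 (h1.trans h2.symm)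
        | exact h13 (h1.trans h3.symm)
        | exact h14 (h1.trans h4.symm)
        | exact h23 (h2.trans h3.symm)
        | exact h24 (h2.trans h4.symm)
        | exact h34 (h3.trans h4.symm)
    have hnmzs : ¬(∀ x y : ZMod (3*t), π x = zs → π y = zs → c x = c y) := by
      intro hmo
      exact hab (hmo w (w+T) hπw hπwT)
    by_cases hC : ∃ z₁ z₂ : ZMod t, z₁ ≠ z₂ ∧
        (¬∀ x y : ZMod (3*t), π x = z₁ → π y = z₁ → c x = c y) ∧
        (¬∀ x y : ZMod (3*t), π x = z₂ → π y = z₂ → c x = c y)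
    · -- II.1 : two non-mono cosets
      obtain ⟨z₁, z₂, hzne, hm1, hm2⟩ := hC
      obtain ⟨u₂, v₂, hu₂, hv₂, hne₂⟩ : ∃ x y, π x = z₂ ∧ π y = z₂ ∧ c x ≠ c y := by
        by_contra hcon
        push_neg at hcon
        exact hm2 (fun x y hx hy => hcon x y hx hy)
      obtain ⟨x₂, hx₂, hx₂ne⟩ : ∃ x, π x = z₂ ∧ c x ≠ c (s z₁) := by
        by_cases hcc : c u₂ = c (s z₁)
        · exact ⟨v₂, hv₂, fun h => hne₂ (hcc.trans h.symm)⟩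
        · exact ⟨u₂, hu₂, hcc⟩
      set ℓ1 : ZMod t → ZMod (3*t) := fun z => if z = z₁ then s z₁ else if z = z₂ then x₂ else s z
        with hℓ1
      have hπℓ : ∀ z, π (ℓ1 z) = z := by
        intro z
        show π (if z = z₁ then s z₁ else if z = z₂ then x₂ else s z) = z
        split_ifs with hh1 hh2
        · rw [hπs, hh1]
        · rw [hx₂, hh2]
        · exact hπs z
      apply IIB ℓ1 hπℓ
      apply KT
      refine CNT2 _ (c w) (c (w+T)) (c (w+T+T)) (c (s z₁)) (c x₂) hab had hbd ?_ ?_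
        (Ne.symm hx₂ne) ?_ ?_ ?_
      · exact nmcol z₁ hm1 (s z₁) (hπs z₁)
      · exact nmcol z₂ hm2 x₂ hx₂
      · refine ⟨z₁, ?_⟩
        show c (ℓ1 z₁) = c (s z₁)
        rw [hℓ1]
        simp
      · refine ⟨z₂, ?_⟩
        show c (ℓ1 z₂) = c x₂
        rw [hℓ1]
        simp [Ne.symm hzne]
      · intro a ha1 ha2 ha3
        obtain ⟨x, hx⟩ := hs a
        have hmono := monoOf x (by rw [hx]; exact ha1) (by rw [hx]; exact ha2)
          (by rw [hx]; exact ha3)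
        have hz1 : π x ≠ z₁ := by
          intro h
          exact hm1 (fun u v hu hv => hmono u v (by rw [h]; exact hu) (by rw [h]; exact hv))
        have hz2 : π x ≠ z₂ := by
          intro h
          exact hm2 (fun u v hu hv => hmono u v (by rw [h]; exact hu) (by rw [h]; exact hv))
        refine ⟨π x, ?_⟩
        show c (ℓ1 (π x)) = a
        rw [hℓ1]
        simp only [if_neg hz1, if_neg hz2]
        rw [← hx]
        exact hmono (s (π x)) x (hπs _) rfl
    · -- II.2 : zs is the unique non-mono coset
      have hUniq : ∀ z : ZMod t, ¬(∀ x y : ZMod (3*t), π x = z → π y = z → c x = c y) → z = zs := by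
        intro z hz
        by_contra hne
        exact hC ⟨z, zs, hne, hz, hnmzs⟩
      by_cases hD : ∃ zm : ZMod t, (∀ x y : ZMod (3*t), π x = zm → π y = zm → c x = c y) ∧
          (c (s zm) = c w ∨ c (s zm) = c (w+T) ∨ c (s zm) = c (w+T+T))
      · -- II.2a
        obtain ⟨zm, hmo, hmu⟩ := hD
        obtain ⟨xstar, hπx, hxne⟩ : ∃ x, π x = zs ∧ c x ≠ c (s zm) := by
          by_cases hmua : c (s zm) = c w
          · exact ⟨w + T, hπwT, by rw [hmua]; exact Ne.symm hab⟩
          · exact ⟨w, hπw, fun h => hmua h.symm⟩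
        set ℓ2 : ZMod t → ZMod (3*t) := fun z => if z = zs then xstar else s z with hℓ2
        have hπℓ : ∀ z, π (ℓ2 z) = z := by
          intro z
          show π (if z = zs then xstar else s z) = z
          split_ifs with hh1
          · rw [hπx, hh1]
          · exact hπs z
        apply IIB ℓ2 hπℓ
        apply KT
        have hzm : zm ≠ zs := by
          intro h
          exact hnmzs (by rw [← h]; exact hmo)
        refine CNT2 _ (c w) (c (w+T)) (c (w+T+T)) (c xstar) (c (s zm)) hab had hbd ?_ hmu
          hxne ?_ ?_ ?_
        · exact nmcol zs hnmzs xstar hπx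
        · refine ⟨zs, ?_⟩
          show c (ℓ2 zs) = c xstar
          rw [hℓ2]; simp
        · refine ⟨zm, ?_⟩
          show c (ℓ2 zm) = c (s zm)
          rw [hℓ2]; simp [hzm]
        · intro a ha1 ha2 ha3
          obtain ⟨x, hx⟩ := hs a
          have hmono := monoOf x (by rw [hx]; exact ha1) (by rw [hx]; exact ha2)
            (by rw [hx]; exact ha3)
          have hz1 : π x ≠ zs := by
            intro h
            exact hnmzs (fun u v hu hv => hmono u v (by rw [h]; exact hu) (by rw [h]; exact hv))
          refine ⟨π x, ?_⟩
          show c (ℓ2 (π x)) = a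
          rw [hℓ2]
          simp only [if_neg hz1]
          rw [← hx]
          exact hmono (s (π x)) x (hπs _) rfl
      · -- II.2b : singleton color classes + mod 3 argument
        have hallmono : ∀ z : ZMod t, z ≠ zs →
            ∀ x y : ZMod (3*t), π x = z → π y = z → c x = c y := by
          intro z hz
          by_contra hcon
          exact hz (hUniq z hcon)
        have SINGa : ∀ x : ZMod (3*t), c x = c w → x = w := by
          intro x hx
          by_cases hzx : π x = zs
          · rcases hKm w x (by rw [hπw]; exact hzx) with rfl | rfl | rfl
            · rfl
            · exact absurd hx (Ne.symm hab)
            · exact absurd hx (Ne.symm had)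
          · exfalso
            apply hD
            refine ⟨π x, hallmono (π x) hzx, Or.inl ?_⟩
            rw [← hx]
            exact hallmono (π x) hzx (s (π x)) x (hπs _) rfl
        have SINGb : ∀ x : ZMod (3*t), c x = c (w+T) → x = w + T := by
          intro x hx
          by_cases hzx : π x = zs
          · rcases hKm w x (by rw [hπw]; exact hzx) with rfl | rfl | rfl
            · exact absurd hx hab
            · rfl
            · exact absurd hx (Ne.symm hbd)
          · exfalso
            apply hD
            refine ⟨π x, hallmono (π x) hzx, Or.inr (Or.inl ?_)⟩
            rw [← hx]
            exact hallmono (π x) hzx (s (π x)) x (hπs _) rfl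
        set ν := ZMod.castHom (dvd_mul_right 3 t) (ZMod 3) with hνdef
        have hνT : ν T = 0 := by
          rw [hTdef, map_natCast, ZMod.natCast_eq_zero_iff]
          exact h3t
        have hνwT : ν (w + T) = ν w := by rw [map_add, hνT, add_zero]
        have FIB : ∀ x : ZMod (3*t), ν x = ν w → ∃ y : ZMod t, 3 * s y + w = x := by
          intro x hx
          have hν0 : ν (x - w) = 0 := by rw [map_sub, hx, sub_self]
          have h3d : (3:ℕ) ∣ (x - w).val := by
            rw [show (x - w) = (((x-w).val : ℕ) : ZMod (3*t)) from
              (ZMod.natCast_rightInverse _).symm, map_natCast,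
              ZMod.natCast_eq_zero_iff] at hν0
            exact hν0
          have hxm : x - w = 3 * ((((x - w).val / 3 : ℕ)) : ZMod (3*t)) := by
            set v := (x - w).val with hv
            have h1 : ((v : ℕ) : ZMod (3*t)) = x - w := ZMod.natCast_rightInverse _
            have h2 : (3 * (v / 3) : ℕ) = v := Nat.mul_div_cancel' h3d
            calc x - w = ((v : ℕ) : ZMod (3*t)) := h1.symm
              _ = ((3 * (v / 3) : ℕ) : ZMod (3*t)) := by rw [h2]
              _ = 3 * ((v / 3 : ℕ) : ZMod (3*t)) := by push_cast; ring
          refine ⟨π ((((x - w).val / 3 : ℕ)) : ZMod (3*t)), ?_⟩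
          set m : ZMod (3*t) := (((x - w).val / 3 : ℕ) : ZMod (3*t)) with hm
          have hd := hK (s (π m) - m) (by rw [map_sub, hπs, sub_self])
          have h3eq : 3 * s (π m) = 3 * m := by
            rcases hd with h | h | h
            · have heqm : s (π m) = m := by linear_combination h
              rw [heqm]
            · have heqm : s (π m) = m + T := by linear_combination h
              rw [heqm]
              linear_combination hT3
            · have heqm : s (π m) = m + T + T := by linear_combination h
              rw [heqm]
              linear_combination 2 * hT3
          rw [h3eq, ← hxm]
          ring
        set cH : ZMod t → Fin (rbSidon t + 1) := fun y => c (3 * s y + w) with hcHdef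
        have hcHnr : ¬ HasRainbowSidon cH := by
          rintro ⟨y₁, y₂, y₃, y₄, heq, p1, p2, p3, p4, p5, p6⟩
          have hd := hK (s y₁ + s y₂ - (s y₃ + s y₄))
            (by rw [map_sub, map_add, map_add, hπs, hπs, hπs, hπs, heq]; ring)
          have h3eq : (3 * s y₁ + w) + (3 * s y₂ + w) = (3 * s y₃ + w) + (3 * s y₄ + w) := by
            rcases hd with h | h | h
            · linear_combination 3 * h
            · linear_combination 3 * h + hT3
            · linear_combination 3 * h + 2 * hT3
          exact hno ⟨_, _, _, _, h3eq, p1, p2, p3, p4, p5, p6⟩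
        have hmiss : ∃ θ₁ θ₂ : Fin (rbSidon t + 1), θ₁ ≠ θ₂ ∧
            (∀ y, cH y ≠ θ₁) ∧ (∀ y, cH y ≠ θ₂) := by
          have hclt : ¬ (rbSidon t ≤ (image cH univ).card) := fun h => hcHnr (KT cH h)
          push_neg at hclt
          have hsub : image cH univ ⊆ univ := Finset.subset_univ _
          have hcards := Finset.card_sdiff_add_card_eq_card hsub
          have huniv : (univ : Finset (Fin (rbSidon t + 1))).card = rbSidon t + 1 := by simp
          have h2lt : 1 < (univ \ image cH univ).card := by omega
          obtain ⟨a, ha, b, hb, hne⟩ := Finset.one_lt_card.mp h2lt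
          rw [Finset.mem_sdiff] at ha hb
          refine ⟨a, b, hne, ?_, ?_⟩
          · intro y hy
            exact ha.2 (Finset.mem_image.2 ⟨y, Finset.mem_univ y, hy⟩)
          · intro y hy
            exact hb.2 (Finset.mem_image.2 ⟨y, Finset.mem_univ y, hy⟩)
        obtain ⟨θ₁, θ₂, hθne, hmθ1, hmθ2⟩ := hmiss
        have P1 : ∀ x : ZMod (3*t), c x = θ₁ → ν x ≠ ν w := by
          intro x hx hνx
          obtain ⟨y, hy⟩ := FIB x hνx
          exact hmθ1 y (by show c (3 * s y + w) = θ₁; rw [hy]; exact hx)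
        have P2 : ∀ x : ZMod (3*t), c x = θ₂ → ν x ≠ ν w := by
          intro x hx hνx
          obtain ⟨y, hy⟩ := FIB x hνx
          exact hmθ2 y (by show c (3 * s y + w) = θ₂; rw [hy]; exact hx)
        have hθ₁α : θ₁ ≠ c w := fun h => P1 w h.symm rfl
        have hθ₂α : θ₂ ≠ c w := fun h => P2 w h.symm rfl
        have hθ₁β : θ₁ ≠ c (w+T) := fun h => P1 (w+T) h.symm hνwT
        have hθ₂β : θ₂ ≠ c (w+T) := fun h => P2 (w+T) h.symm hνwT
        by_cases hE : ∃ y₁ y₂ : ZMod (3*t), c y₁ = θ₁ ∧ c y₂ = θ₂ ∧ ν y₁ ≠ ν y₂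
        · obtain ⟨y₁, y₂, hy₁, hy₂, hνne⟩ := hE
          have hZ : ν y₁ + ν y₂ = ν w + ν w := by
            have Z3 : ∀ p q r : ZMod 3, p ≠ r → q ≠ r → p ≠ q → p + q = r + r := by decide
            exact Z3 _ _ _ (fun h => P1 y₁ hy₁ h) (fun h => P2 y₂ hy₂ h) hνne
          have hνx' : ν (y₁ + y₂ - w) = ν w := by
            rw [map_sub, map_add, hZ]
            ring
          have hcx' : c (y₁ + y₂ - w) = c w := by
            by_contra hcc
            apply NR w (y₁ + y₂ - w) y₁ y₂ (by ring)
            refine ⟨fun h => hcc h.symm, by rw [hy₁]; exact Ne.symm hθ₁α,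
              by rw [hy₂]; exact Ne.symm hθ₂α, ?_, ?_, by rw [hy₁, hy₂]; exact hθne⟩
            · intro h
              exact P1 _ (h.trans hy₁) hνx'
            · intro h
              exact P2 _ (h.trans hy₂) hνx'
          have h1 : y₁ + y₂ = w + w := by linear_combination SINGa _ hcx'
          have hνx'' : ν (y₁ + y₂ - (w+T)) = ν w := by
            rw [map_sub, map_add, hZ, hνwT]
            ring
          have hcx'' : c (y₁ + y₂ - (w+T)) = c (w+T) := by
            by_contra hcc
            apply NR (w+T) (y₁ + y₂ - (w+T)) y₁ y₂ (by ring)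
            refine ⟨fun h => hcc h.symm, by rw [hy₁]; exact Ne.symm hθ₁β,
              by rw [hy₂]; exact Ne.symm hθ₂β, ?_, ?_, by rw [hy₁, hy₂]; exact hθne⟩
            · intro h
              exact P1 _ (h.trans hy₁) hνx''
            · intro h
              exact P2 _ (h.trans hy₂) hνx''
          have h2 : y₁ + y₂ = (w+T) + (w+T) := by linear_combination SINGb _ hcx''
          exact hT2ne (by linear_combination h1 - h2)
        · push_neg at hE
          obtain ⟨y₁, hy₁⟩ := hs θ₁
          obtain ⟨y₂, hy₂⟩ := hs θ₂
          have hg0 : ν (y₁ - y₂) = 0 := by rw [map_sub, hE y₁ y₂ hy₁ hy₂, sub_self]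
          have hνwg : ν (w + (y₁ - y₂)) = ν w := by rw [map_add, hg0, add_zero]
          have hcwg : c (w + (y₁ - y₂)) = c w := by
            by_contra hcc
            apply NR y₁ w y₂ (w + (y₁ - y₂)) (by ring)
            refine ⟨by rw [hy₁]; exact hθ₁α, by rw [hy₁, hy₂]; exact hθne, ?_,
              by rw [hy₂]; exact Ne.symm hθ₂α, fun h => hcc h.symm, ?_⟩
            · intro h
              exact P1 _ (h.symm.trans hy₁) hνwg
            · intro h
              exact P2 _ (h.symm.trans hy₂) hνwg
          have hyy : y₁ = y₂ := by linear_combination SINGa _ hcwg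
          exact hθne (by rw [← hy₁, ← hy₂, hyy])
  · -- CASE III : no 3-colored coset
    have hTC : ∀ z : ZMod t, ∃ x : ZMod (3*t), π x = z ∧ c (x + T + T) = c (x + T) ∧
        ((¬ ∀ u v : ZMod (3*t), π u = z → π v = z → c u = c v) → c x ≠ c (x + T)) ∧
        ((∀ u v : ZMod (3*t), π u = z → π v = z → c u = c v) → x = s z) := by
      intro z
      have hπ0 : π (s z) = z := hπs z
      have hπ1 : π (s z + T) = z := by rw [map_add, hπ0, hπT, add_zero]
      have hπ2 : π (s z + T + T) = z := by rw [map_add, hπ1, hπT, add_zero]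
      by_cases hM : ∀ u v : ZMod (3*t), π u = z → π v = z → c u = c v
      · exact ⟨s z, hπ0, hM _ _ hπ2 hπ1, fun h => absurd hM h, fun _ => rfl⟩
      · have r1 : s z + T + T + T = s z := by linear_combination hT3
        have r2 : s z + T + T + T + T = s z + T := by linear_combination hT3
        by_cases hab' : c (s z) = c (s z + T)
        · by_cases hbd' : c (s z + T) = c (s z + T + T)
          · exfalso
            apply hM
            intro u v hu hv
            have hcc : ∀ y, π y = z → c y = c (s z) := by
              intro y hy
              rcases hKm (s z) y (by rw [hπ0]; exact hy) with rfl | rfl | rfl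
              · rfl
              · exact hab'.symm
              · exact (hab'.trans hbd').symm
            rw [hcc u hu, hcc v hv]
          · refine ⟨s z + T + T, hπ2, ?_, fun _ => ?_, fun h => absurd h hM⟩
            · rw [r2, r1]
              exact hab'.symm
            · rw [r1]
              intro h
              exact hbd' (hab'.symm.trans h.symm)
        · by_cases had' : c (s z) = c (s z + T + T)
          · refine ⟨s z + T, hπ1, ?_, fun _ => ?_, fun h => absurd h hM⟩
            · rw [r1]
              exact had'
            · intro h
              exact hab' (had'.trans h.symm)
          · by_cases hbd' : c (s z + T) = c (s z + T + T)
            · exact ⟨s z, hπ0, hbd'.symm, fun _ => hab', fun h => absurd h hM⟩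
            · exact absurd ⟨z, hab', had', hbd'⟩ hB
    choose xm hxm using hTC
    have hxm1 : ∀ z, π (xm z) = z := fun z => (hxm z).1
    have hxm2 : ∀ z, c (xm z + T + T) = c (xm z + T) := fun z => (hxm z).2.1
    have hπxmT : ∀ z, π (xm z + T) = z := fun z => by rw [map_add, hxm1, hπT, add_zero]
    have cosetcol : ∀ (z : ZMod t) (y : ZMod (3*t)), π y = z →
        c y = c (xm z) ∨ c y = c (xm z + T) := by
      intro z y hy
      rcases hKm (xm z) y (by rw [hxm1]; exact hy) with rfl | rfl | rfl
      · exact Or.inl rfl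
      · exact Or.inr rfl
      · exact Or.inr (hxm2 z)
    by_cases hq : ∃ a b : Fin (rbSidon t + 1), a ≠ b ∧ (∀ z, c (xm z + T) ≠ a) ∧
        (∀ z, c (xm z + T) ≠ b)
    · -- marked coloring: minority color on never-majority cosets
      set ℓ3 : ZMod t → ZMod (3*t) := fun z =>
        if (∀ z' : ZMod t, c (xm z' + T) ≠ c (xm z)) then xm z else xm z + T with hℓ3
      have hmark : ∀ z, (∀ z' : ZMod t, c (xm z' + T) ≠ c (xm z)) → ℓ3 z = xm z := by
        intro z h
        rw [hℓ3]
        simp only [if_pos h]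
      have hflex : ∀ z, ¬(∀ z' : ZMod t, c (xm z' + T) ≠ c (xm z)) → ℓ3 z = xm z + T := by
        intro z h
        rw [hℓ3]
        simp only [if_neg h]
      have hπℓ : ∀ z, π (ℓ3 z) = z := by
        intro z
        by_cases h : ∀ z' : ZMod t, c (xm z' + T) ≠ c (xm z)
        · rw [hmark z h]
          exact hxm1 z
        · rw [hflex z h]
          exact hπxmT z
      have hmne : ∀ z, (∀ z' : ZMod t, c (xm z' + T) ≠ c (xm z)) → c (xm z) ≠ c (xm z + T) := by
        intro z h
        exact (hxm z).2.2.1 (fun hM => h z (hM _ _ (hπxmT z) (hxm1 z)))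
      have SLOT : ∀ qa qb qc qd : ZMod t,
          (∀ z', c (xm z' + T) ≠ c (xm qa)) → (∀ z', c (xm z' + T) ≠ c (xm qb)) →
          (∀ z', c (xm z' + T) ≠ c (xm qc)) →
          qa + qb = qc + qd →
          c (ℓ3 qa) ≠ c (ℓ3 qb) → c (ℓ3 qa) ≠ c (ℓ3 qc) → c (ℓ3 qa) ≠ c (ℓ3 qd) →
          c (ℓ3 qb) ≠ c (ℓ3 qc) → c (ℓ3 qb) ≠ c (ℓ3 qd) → c (ℓ3 qc) ≠ c (ℓ3 qd) → False := by
        intro qa qb qc qd ba bb bc heq' d1 d2 d3 d4 d5 d6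
        rw [hmark qa ba] at d1 d2 d3
        rw [hmark qb bb] at d1 d4 d5
        rw [hmark qc bc] at d2 d4 d6
        obtain ⟨y, hy, hmem⟩ := YT (xm qa) (xm qb) (xm qc) qd
          (by rw [hxm1, hxm1, hxm1]; exact heq') d1 d2 d4
        rcases cosetcol qd y hy with h | h
        · by_cases bd : ∀ z' : ZMod t, c (xm z' + T) ≠ c (xm qd)
          · rw [hmark qd bd] at d3 d5 d6
            rw [h] at hmem
            rcases hmem with h' | h' | h'
            · exact d3 h'.symm
            · exact d5 h'.symm
            · exact d6 h'.symm
          · push_neg at bd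
            obtain ⟨z', hz'⟩ := bd
            rw [h] at hmem
            rcases hmem with h' | h' | h'
            · exact ba z' (hz'.trans h')
            · exact bb z' (hz'.trans h')
            · exact bc z' (hz'.trans h')
        · rw [h] at hmem
          rcases hmem with h' | h' | h'
          · exact ba qd h'
          · exact bb qd h'
          · exact bc qd h'
      have hB3 : ¬ HasRainbowSidon (fun z => c (ℓ3 z)) := by
        intro hrb
        obtain ⟨q₁, q₂, q₃, q₄, heq, h12, h13, h14, h23, h24, h34⟩ := hrb
        simp only at h12 h13 h14 h23 h24 h34
        by_cases b1 : ∀ z' : ZMod t, c (xm z' + T) ≠ c (xm q₁)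
        · by_cases b2 : ∀ z' : ZMod t, c (xm z' + T) ≠ c (xm q₂)
          · by_cases b3 : ∀ z' : ZMod t, c (xm z' + T) ≠ c (xm q₃)
            · exact SLOT q₁ q₂ q₃ q₄ b1 b2 b3 heq h12 h13 h14 h23 h24 h34
            · by_cases b4 : ∀ z' : ZMod t, c (xm z' + T) ≠ c (xm q₄)
              · exact SLOT q₁ q₂ q₄ q₃ b1 b2 b4 (by linear_combination heq)
                  h12 h14 h13 h24 h23 (Ne.symm h34)
              · exact FLEXS (ℓ3 q₃) (ℓ3 q₄) (ℓ3 q₁) (ℓ3 q₂)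
                  (by rw [hflex q₃ b3]; exact hxm2 q₃) (by rw [hflex q₄ b4]; exact hxm2 q₄)
                  (by rw [hπℓ, hπℓ, hπℓ, hπℓ]; linear_combination -heq)
                  h34 (Ne.symm h13) (Ne.symm h23) (Ne.symm h14) (Ne.symm h24) h12
          · by_cases b3 : ∀ z' : ZMod t, c (xm z' + T) ≠ c (xm q₃)
            · by_cases b4 : ∀ z' : ZMod t, c (xm z' + T) ≠ c (xm q₄)
              · exact SLOT q₃ q₄ q₁ q₂ b3 b4 b1 (by linear_combination -heq)
                  h34 (Ne.symm h13) (Ne.symm h23) (Ne.symm h14) (Ne.symm h24) h12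
              · exact FLEXO (ℓ3 q₂) (ℓ3 q₁) (ℓ3 q₄) (ℓ3 q₃)
                  (by rw [hflex q₂ b2]; exact hxm2 q₂) (by rw [hflex q₄ b4]; exact hxm2 q₄)
                  (by rw [hπℓ, hπℓ, hπℓ, hπℓ]; linear_combination heq)
                  (Ne.symm h12) h24 h23 h14 h13 (Ne.symm h34)
            · exact FLEXO (ℓ3 q₂) (ℓ3 q₁) (ℓ3 q₃) (ℓ3 q₄)
                (by rw [hflex q₂ b2]; exact hxm2 q₂) (by rw [hflex q₃ b3]; exact hxm2 q₃)
                (by rw [hπℓ, hπℓ, hπℓ, hπℓ]; linear_combination heq)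
                (Ne.symm h12) h23 h24 h13 h14 h34
        · by_cases b2 : ∀ z' : ZMod t, c (xm z' + T) ≠ c (xm q₂)
          · by_cases b3 : ∀ z' : ZMod t, c (xm z' + T) ≠ c (xm q₃)
            · by_cases b4 : ∀ z' : ZMod t, c (xm z' + T) ≠ c (xm q₄)
              · exact SLOT q₃ q₄ q₂ q₁ b3 b4 b2 (by linear_combination -heq)
                  h34 (Ne.symm h23) (Ne.symm h13) (Ne.symm h24) (Ne.symm h14) (Ne.symm h12)
              · exact FLEXO (ℓ3 q₁) (ℓ3 q₂) (ℓ3 q₄) (ℓ3 q₃)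
                  (by rw [hflex q₁ b1]; exact hxm2 q₁) (by rw [hflex q₄ b4]; exact hxm2 q₄)
                  (by rw [hπℓ, hπℓ, hπℓ, hπℓ]; linear_combination heq)
                  h12 h14 h13 h24 h23 (Ne.symm h34)
            · exact FLEXO (ℓ3 q₁) (ℓ3 q₂) (ℓ3 q₃) (ℓ3 q₄)
                (by rw [hflex q₁ b1]; exact hxm2 q₁) (by rw [hflex q₃ b3]; exact hxm2 q₃)
                (by rw [hπℓ, hπℓ, hπℓ, hπℓ]; exact heq)
                h12 h13 h14 h23 h24 h34
          · exact FLEXS (ℓ3 q₁) (ℓ3 q₂) (ℓ3 q₃) (ℓ3 q₄)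
              (by rw [hflex q₁ b1]; exact hxm2 q₁) (by rw [hflex q₂ b2]; exact hxm2 q₂)
              (by rw [hπℓ, hπℓ, hπℓ, hπℓ]; exact heq)
              h12 h13 h14 h23 h24 h34
      have MSTEP : ∀ z₁ : ZMod t, (∀ z', c (xm z' + T) ≠ c (xm z₁)) →
          ∀ u : ZMod (3*t), c u ≠ c (xm z₁) → c u ≠ c (xm z₁ + T) →
          c (u+T) ≠ c (xm z₁) → c (u+T) ≠ c (xm z₁ + T) → c (u + T) = c u := by
        intro z₁ hN u g1 g2 g3 g4
        by_contra hcc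
        exact NR (xm z₁) (u+T) (xm z₁ + T) u (by ring)
          ⟨Ne.symm g3, hmne z₁ hN, Ne.symm g1, g4, hcc, Ne.symm g2⟩
      have CROSS : ∀ z₁ z₂ : ZMod t, (∀ z', c (xm z' + T) ≠ c (xm z₁)) →
          (∀ z', c (xm z' + T) ≠ c (xm z₂)) →
          c (xm z₁) ≠ c (xm z₂) → c (xm z₁ + T) = c (xm z₂ + T) := by
        intro z₁ z₂ hN1 hN2 hne12
        by_contra hmm
        have := MSTEP z₁ hN1 (xm z₂) (Ne.symm hne12) (fun h => hN2 z₁ h.symm)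
          (hN1 z₂) (fun h => hmm h.symm)
        exact hmne z₂ hN2 this.symm
      have FINDM : ∀ a : Fin (rbSidon t + 1), (∀ z, c (ℓ3 z) ≠ a) →
          ∃ z, (∀ z', c (xm z' + T) ≠ c (xm z)) ∧ c (xm z + T) = a := by
        intro a hma
        obtain ⟨x, hx⟩ := hs a
        rcases cosetcol (π x) x rfl with h | h
        · by_cases hN : ∀ z' : ZMod t, c (xm z' + T) ≠ c (xm (π x))
          · exact absurd (by rw [hmark _ hN, ← h]; exact hx) (hma (π x))
          · push_neg at hN
            obtain ⟨z', hz'⟩ := hN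
            by_cases hN' : ∀ z'' : ZMod t, c (xm z'' + T) ≠ c (xm z')
            · exact ⟨z', hN', by rw [hz', ← h]; exact hx⟩
            · exact absurd (by rw [hflex z' hN', hz', ← h]; exact hx) (hma z')
        · by_cases hN' : ∀ z'' : ZMod t, c (xm z'' + T) ≠ c (xm (π x))
          · exact ⟨π x, hN', by rw [← h]; exact hx⟩
          · exact absurd (by rw [hflex _ hN', ← h]; exact hx) (hma (π x))
      have hMU : ∀ a b : Fin (rbSidon t + 1), (∀ z, c (ℓ3 z) ≠ a) → (∀ z, c (ℓ3 z) ≠ b) →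
          a = b := by
        intro a b hma hmb
        obtain ⟨z₁, hN1, hv1⟩ := FINDM a hma
        obtain ⟨z₂, hN2, hv2⟩ := FINDM b hmb
        rw [← hv1, ← hv2]
        by_cases he : c (xm z₁) = c (xm z₂)
        · obtain ⟨θ₁, θ₂, hneθ, hNq1, hNq2⟩ := hq
          have pick : ∃ θ, (∀ z', c (xm z' + T) ≠ θ) ∧ θ ≠ c (xm z₁) := by
            by_cases hh : θ₁ = c (xm z₁)
            · exact ⟨θ₂, hNq2, by rw [← hh]; exact Ne.symm hneθ⟩
            · exact ⟨θ₁, hNq1, hh⟩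
          obtain ⟨θ, hNθ, hθne⟩ := pick
          obtain ⟨x, hx⟩ := hs θ
          rcases cosetcol (π x) x rfl with h | h
          · have hPX : c (xm (π x)) = θ := h.symm.trans hx
            have hN3 : ∀ z', c (xm z' + T) ≠ c (xm (π x)) := by
              intro z' hcontra
              exact hNθ z' (hcontra.trans hPX)
            have c1 := CROSS z₁ (π x) hN1 hN3
              (by rw [hPX]; exact fun hh2 => hθne hh2.symm)
            have c2 := CROSS z₂ (π x) hN2 hN3
              (by rw [hPX]; exact fun hh2 => hθne (hh2.symm.trans he.symm))
            exact c1.trans c2.symm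
          · exact absurd (h.symm.trans hx) (hNθ (π x))
        · exact CROSS z₁ z₂ hN1 hN2 he
      exact hB3 (KT _ (CNT1 _ hMU))
    · -- plain majority coloring
      have hB4 : ¬ HasRainbowSidon (fun z => c (xm z + T)) := by
        intro hrb
        obtain ⟨q₁, q₂, q₃, q₄, heq, h12, h13, h14, h23, h24, h34⟩ := hrb
        simp only at h12 h13 h14 h23 h24 h34
        exact FLEXS (xm q₁ + T) (xm q₂ + T) (xm q₃ + T) (xm q₄ + T) (hxm2 q₁) (hxm2 q₂)
          (by rw [hπxmT, hπxmT, hπxmT, hπxmT]; exact heq) h12 h13 h14 h23 h24 h34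
      have hMU : ∀ a b : Fin (rbSidon t + 1), (∀ z, c (xm z + T) ≠ a) →
          (∀ z, c (xm z + T) ≠ b) → a = b := by
        intro a b hma hmb
        by_contra hne
        exact hq ⟨a, b, hne, hma, hmb⟩
      exact hB4 (KT _ (CNT1 _ hMU))

private lemma key' (t : ℕ) (h3t : 3 ∣ t) (ht : 3 ≤ t) :
    rbSidon (3*t) ≤ rbSidon t + 1 :=
  Nat.sInf_le ⟨by omega, fun c hc => key t h3t ht c hc⟩

theorem rb_sidon_nine_dvd (n t : ℕ) (hn : 0 < n) (h9 : 9 ∣ n) (ht : t = n / 3) :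
    rbSidon n ≤ rbSidon 3 + rbSidon t - 3 ∧ rbSidon n ≤ rbSidon t + 1 := by
  obtain ⟨k, rfl⟩ := h9
  have hk : 1 ≤ k := by omega
  have ht3 : t = 3 * k := by
    rw [ht, show 9 * k = 3 * k * 3 by ring, Nat.mul_div_cancel _ (by norm_num)]
  subst ht3
  have hkey : rbSidon (9 * k) ≤ rbSidon (3 * k) + 1 := by
    rw [show 9 * k = 3 * (3 * k) by ring]
    exact key' (3 * k) ⟨k, rfl⟩ (by omega)
  refine ⟨?_, hkey⟩
  rw [rbSidon_three]
  omega
end
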